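/- arXiv:2111.00156 — 2 statements merged into one kernel-verified Lean document; each statement's English description precedes it below -/
import Mathlib

section
/- Let (M, F) be a strongly pseudoconvex complex Finsler manifold. Then the following are equivalent: (i) the holomorphic sectional curvature tensors of the canonical connection and of the Chern-Finsler connection coincide, i.e. R_{αβ̄μν̄} = Ω_{αβ̄;μν̄} for all indices 1 ≤ α, β, μ, ν ≤ n; (ii) K_∇(H) = K_D(H) for every nonzero horizontal vector H; (iii) F is a Kähler-Finsler metric, i.e. Γ^α_{β;μ} = Γ^α_{μ;β} for all indices. -/
/-!
A local-coordinate formalization of strongly pseudoconvex complex Finsler metrics,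
following Abate–Patrizio and Munteanu.  A point of the (slit) holomorphic tangent
bundle `M̃ = T^{1,0}M ∖ {0}` is represented in a holomorphic coordinate chart by a
pair `(z, v) ∈ ℂⁿ × ℂⁿ`.  All derivatives are genuine Wirtinger derivatives
(expressed through `fderiv ℝ`), and all the tensors of the Chern–Finsler
connection `D`, the canonical connection `∇` of Munteanu and its extension `∇ᶜ`
are defined by their standard local-coordinate expressions.  Horizontal
`(p,q)`-forms on the projective tangent bundle `PM̃` are represented by their
(alternating, `0`-homogeneous) coefficient arrays, in the convention
`φ = (1/(p! q!)) φ_{I J̄} dz^I ∧ dz̄^J`.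
The invariant integral `∫_{PM̃} · dμ_{PM̃}` (which exists when the base manifold
`M` is compact) is encoded by the structure `PTMIntegral`; a hypothesis
`(vol : PTMIntegral F)` plays the role of the compactness of `M`.
-/

open ComplexConjugate BigOperators

noncomputable section

namespace CFG

/-- Points of the holomorphic tangent bundle in local coordinates: `(z, v)`. -/
abbrev Pt (n : ℕ) : Type := (Fin n → ℂ) × (Fin n → ℂ)

/-- The slit domain `M̃` : `v ≠ 0`. -/
def slit (n : ℕ) : Set (Pt n) := {p | p.2 ≠ 0}

variable {n : ℕ}

/-- Wirtinger derivative `∂/∂z^μ`. -/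
def dz (μ : Fin n) (f : Pt n → ℂ) : Pt n → ℂ := fun p =>
  (1 / 2 : ℂ) * (fderiv ℝ f p (Pi.single μ 1, 0) -
    Complex.I * fderiv ℝ f p (Pi.single μ Complex.I, 0))

/-- Wirtinger derivative `∂/∂z̄^μ`. -/
def dzb (μ : Fin n) (f : Pt n → ℂ) : Pt n → ℂ := fun p =>
  (1 / 2 : ℂ) * (fderiv ℝ f p (Pi.single μ 1, 0) +
    Complex.I * fderiv ℝ f p (Pi.single μ Complex.I, 0))

/-- Wirtinger derivative `∂/∂v^μ`. -/
def dv (μ : Fin n) (f : Pt n → ℂ) : Pt n → ℂ := fun p =>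
  (1 / 2 : ℂ) * (fderiv ℝ f p (0, Pi.single μ 1) -
    Complex.I * fderiv ℝ f p (0, Pi.single μ Complex.I))

/-- Wirtinger derivative `∂/∂v̄^μ`. -/
def dvb (μ : Fin n) (f : Pt n → ℂ) : Pt n → ℂ := fun p =>
  (1 / 2 : ℂ) * (fderiv ℝ f p (0, Pi.single μ 1) +
    Complex.I * fderiv ℝ f p (0, Pi.single μ Complex.I))

/-- Wirtinger derivative `∂/∂z^μ` for functions on the base manifold. -/
def bdz (μ : Fin n) (f : (Fin n → ℂ) → ℂ) : (Fin n → ℂ) → ℂ := fun z =>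
  (1 / 2 : ℂ) * (fderiv ℝ f z (Pi.single μ 1) -
    Complex.I * fderiv ℝ f z (Pi.single μ Complex.I))

/-- Wirtinger derivative `∂/∂z̄^μ` for functions on the base manifold. -/
def bdzb (μ : Fin n) (f : (Fin n → ℂ) → ℂ) : (Fin n → ℂ) → ℂ := fun z =>
  (1 / 2 : ℂ) * (fderiv ℝ f z (Pi.single μ 1) +
    Complex.I * fderiv ℝ f z (Pi.single μ Complex.I))

/-- A real function viewed as a complex-valued one. -/
def cplx (G : Pt n → ℝ) : Pt n → ℂ := fun p => (G p : ℂ)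

/-- Levi matrix entry `G_{αβ̄} = ∂²G/∂v^α ∂v̄^β`. -/
def levi (G : Pt n → ℝ) (α β : Fin n) : Pt n → ℂ := dv α (dvb β (cplx G))

/-- The coefficient array of a horizontal `(p,q)`-form, in the convention
`φ = (1/(p! q!)) φ_{α₁⋯αₚ β̄₁⋯β̄__q} dz^{α₁} ∧ ⋯ ∧ dz̄^{β_q}`. -/
abbrev HForm (n p q : ℕ) : Type := (Fin p → Fin n) → (Fin q → Fin n) → Pt n → ℂ

/-- The sign of a permutation, as a complex number. -/
def permSign {m : ℕ} (σ : Equiv.Perm (Fin m)) : ℂ := ((Equiv.Perm.sign σ : ℤ) : ℂ)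

/-- The positive `(1,1)`-form `√-1 α ∧ ᾱ` built from the `(1,0)`-covector
`α = a_μ dz^μ`. -/
def oneone (a : Fin n → ℂ) : HForm n 1 1 := fun I J _ =>
  Complex.I * a (I 0) * conj (a (J 0))

/-- Wedge product of horizontal forms (coefficient arrays, shuffle formula). -/
def wedge {p q p' q' : ℕ} (φ : HForm n p q) (ψ : HForm n p' q') :
    HForm n (p + p') (q + q') := fun I J x =>
  (((p.factorial * p'.factorial * q.factorial * q'.factorial : ℕ) : ℂ))⁻¹ *
    ∑ σ : Equiv.Perm (Fin (p + p')), ∑ τ : Equiv.Perm (Fin (q + q')),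
      permSign σ * permSign τ *
        (φ (fun i => I (σ (Fin.castAdd p' i))) (fun j => J (τ (Fin.castAdd q' j))) x *
          ψ (fun i => I (σ (Fin.natAdd p i))) (fun j => J (τ (Fin.natAdd q j))) x)

/-- The density of a top-degree `(n,n)` horizontal form with respect to the
positive volume form `√-1^{n²} dz^1 ∧ ⋯ ∧ dz^n ∧ dz̄^1 ∧ ⋯ ∧ dz̄^n`. -/
def topVal {m : ℕ} (Φ : HForm n m m) (h : m ≤ n) : Pt n → ℂ := fun x =>
  Φ (fun j => Fin.castLE h j) (fun j => Fin.castLE h j) x / Complex.I ^ (n ^ 2)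

/-- `φ` is (the coefficient array of) a smooth horizontal `(p,q)`-form on `PM̃`:
it is alternating in each group of indices, smooth on the slit bundle, and its
coefficients are `0`-homogeneous with respect to the fibre coordinate `v`. -/
def IsHorizontalForm {p q : ℕ} (φ : HForm n p q) : Prop :=
  (∀ (σ : Equiv.Perm (Fin p)) (I : Fin p → Fin n) (J : Fin q → Fin n) (x : Pt n),
      φ (I ∘ σ) J x = permSign σ * φ I J x) ∧
  (∀ (τ : Equiv.Perm (Fin q)) (I : Fin p → Fin n) (J : Fin q → Fin n) (x : Pt n),
      φ I (J ∘ τ) x = permSign τ * φ I J x) ∧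
  (∀ I J, ContDiffOn ℝ (⊤ : ℕ∞) (φ I J) (slit n)) ∧
  (∀ I J (z v : Fin n → ℂ) (ζ : ℂ), ζ ≠ 0 → v ≠ 0 →
      φ I J (z, ζ • v) = φ I J (z, v))

/-- A strongly pseudoconvex complex Finsler metric on (a chart of) `M`,
recorded through `G = F²`. -/
structure SPCF (n : ℕ) where
  /-- `G = F²`. -/
  G : Pt n → ℝ
  contG : Continuous G
  smoothG : ContDiffOn ℝ (⊤ : ℕ∞) G (slit n)
  posG : ∀ p ∈ slit n, 0 < G p
  /-- `F(z, ζv) = |ζ| F(z,v)`, i.e. `G(z, ζv) = |ζ|² G(z,v)`. -/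
  homogG : ∀ (z v : Fin n → ℂ) (ζ : ℂ), G (z, ζ • v) = ‖ζ‖ ^ 2 * G (z, v)
  /-- The Levi matrix `(G_{αβ̄})` is positive definite on the slit bundle. -/
  posdef : ∀ p ∈ slit n, ∀ w : Fin n → ℂ, w ≠ 0 →
    0 < (∑ α, ∑ β, levi G α β p * w α * conj (w β)).re ∧
      (∑ α, ∑ β, levi G α β p * w α * conj (w β)).im = 0

namespace SPCF

variable (F : SPCF n)

/-- `G` as a complex-valued function. -/
def Gc : Pt n → ℂ := cplx F.G

/-- The fundamental tensor `G_{αβ̄}`. -/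
def Gm (α β : Fin n) : Pt n → ℂ := levi F.G α β

/-- The Levi matrix at a point. -/
def Levi (p : Pt n) : Matrix (Fin n) (Fin n) ℂ := Matrix.of fun α β => F.Gm α β p

/-- The inverse metric: `Ginv λ α = G^{λ̄α}`, so that `∑ λ, G_{βλ̄} G^{λ̄α} = δ_β^α`. -/
def Ginv (l α : Fin n) : Pt n → ℂ := fun p => (F.Levi p)⁻¹ l α

/-- The Chern–Finsler nonlinear connection coefficients `Γ^α_{;μ} = G^{λ̄α} G_{λ̄;μ}`. -/
def Γ0 (α μ : Fin n) : Pt n → ℂ := fun p => ∑ l, F.Ginv l α p * dz μ (dvb l F.Gc) p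

/-- The horizontal derivative `δ_μ = ∂_μ - Γ^α_{;μ} ∂̇_α`. -/
def δh (μ : Fin n) (f : Pt n → ℂ) : Pt n → ℂ := fun p =>
  dz μ f p - ∑ α, F.Γ0 α μ p * dv α f p

/-- The conjugate horizontal derivative `δ_ν̄`. -/
def δhb (ν : Fin n) (f : Pt n → ℂ) : Pt n → ℂ := fun p =>
  dzb ν f p - ∑ α, conj (F.Γ0 α ν p) * dvb α f p

/-- The horizontal Chern–Finsler connection coefficients `Γ^α_{β;μ} = G^{λ̄α} δ_μ(G_{βλ̄})`. -/
def Γh (α β μ : Fin n) : Pt n → ℂ := fun p => ∑ l, F.Ginv l α p * F.δh μ (F.Gm β l) p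

/-- `G_{αβ̄σ}`. -/
def Gm3 (α β σ : Fin n) : Pt n → ℂ := dv σ (F.Gm α β)

/-- `G_{αβ̄τ̄}`. -/
def Gm3b (α β τ : Fin n) : Pt n → ℂ := dvb τ (F.Gm α β)

/-- The holomorphic sectional curvature tensor `Ω_{αβ̄;μν̄}` of the
Chern–Finsler connection `D`. -/
def Om (α β μ ν : Fin n) : Pt n → ℂ := fun p =>
  -F.δhb ν (F.δh μ (F.Gm α β)) p
  + (∑ l, ∑ k, F.δh μ (F.Gm α l) p * F.Ginv l k p * F.δhb ν (F.Gm k β) p)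
  - ∑ σ, F.Gm3 α β σ p * F.δhb ν (F.Γ0 σ μ) p

/-- The canonical connection coefficients `L^α_{βμ}`. -/
def Lh (α β μ : Fin n) : Pt n → ℂ := fun p =>
  (1 / 2 : ℂ) * ∑ l, F.Ginv l α p * (F.δh μ (F.Gm β l) p + F.δh β (F.Gm μ l) p)

/-- The canonical connection coefficients `L^α_{βμ̄}`. -/
def Lhb (α β μ : Fin n) : Pt n → ℂ := fun p =>
  (1 / 2 : ℂ) * ∑ l, F.Ginv l α p * (F.δhb μ (F.Gm β l) p - F.δhb l (F.Gm β μ) p)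

/-- The holomorphic sectional curvature tensor `R_{αβ̄μν̄}` of Munteanu's
canonical connection `∇`, i.e.
`⟨∇_{δ_μ}∇_{δ_ν̄}δ_α - ∇_{δ_ν̄}∇_{δ_μ}δ_α - ∇_{[δ_μ,δ_ν̄]}δ_α, δ_β⟩`
expressed in local coordinates. -/
def Rc (α β μ ν : Fin n) : Pt n → ℂ := fun p =>
  (∑ g, (F.δh μ (F.Lhb g α ν) p - F.δhb ν (F.Lh g α μ) p
      + ∑ σ, (F.Lhb σ α ν p * F.Lh g σ μ p - F.Lh σ α μ p * F.Lhb g σ ν p)) * F.Gm g β p)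
  - ∑ σ, F.Gm3 α β σ p * F.δhb ν (F.Γ0 σ μ) p

/-- The holomorphic sectional curvature tensor `K_{αβ̄μν̄}` of the extension `∇ᶜ`
of the canonical connection to the complexified tangent bundle, in local
coordinates (the extra term, compared with `R_{αβ̄μν̄}`, comes from the mixed
connection coefficients `L^α_{β̄μ} = L^α_{μβ̄}` and their conjugates). -/
def Kc (α β μ ν : Fin n) : Pt n → ℂ := fun p =>
  (∑ g, (F.δh μ (F.Lhb g α ν) p - F.δhb ν (F.Lh g α μ) p
      + ∑ σ, (F.Lhb σ α ν p * F.Lh g σ μ p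
          + conj (F.Lhb σ ν α p) * F.Lhb g μ σ p
          - F.Lh σ α μ p * F.Lhb g σ ν p)) * F.Gm g β p)
  - ∑ σ, F.Gm3 α β σ p * F.δhb ν (F.Γ0 σ μ) p

/-- The horizontal torsion tensor `S^γ_{αβ} = ½(Γ^γ_{α;β} - Γ^γ_{β;α})`. -/
def Sh (γ α β : Fin n) : Pt n → ℂ := fun p => (1 / 2 : ℂ) * (F.Γh γ α β p - F.Γh γ β α p)

/-- `S_α = ∑_γ S^γ_{αγ}`. -/
def S1 (α : Fin n) : Pt n → ℂ := fun p => ∑ γ, F.Sh γ α γ p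

/-- `S_{αγλ̄} = ½(δ_γ(G_{αλ̄}) - δ_α(G_{γλ̄}))`. -/
def Shl (α γ l : Fin n) : Pt n → ℂ := fun p =>
  (1 / 2 : ℂ) * (F.δh γ (F.Gm α l) p - F.δh α (F.Gm γ l) p)

/-- The Ricci curvature `Ω_{μν̄} = G^{β̄α} Ω_{αβ̄;μν̄}` of the Chern–Finsler
connection, so that `Ric_D = √-1 Ω_{μν̄} dz^μ ∧ dz̄^ν`. -/
def ricD (μ ν : Fin n) : Pt n → ℂ := fun p => ∑ α, ∑ β, F.Ginv β α p * F.Om α β μ ν p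

/-- The Ricci curvature `R_{μν̄} = G^{β̄α} R_{αβ̄μν̄}` of the canonical connection. -/
def ricR (μ ν : Fin n) : Pt n → ℂ := fun p => ∑ α, ∑ β, F.Ginv β α p * F.Rc α β μ ν p

/-- The Ricci curvature `K_{μν̄} = G^{β̄α} K_{αβ̄μν̄}` of the connection `∇ᶜ`. -/
def ricK (μ ν : Fin n) : Pt n → ℂ := fun p => ∑ α, ∑ β, F.Ginv β α p * F.Kc α β μ ν p

/-- The scalar curvature `s_D = G^{β̄α} G^{ν̄μ} Ω_{αβ̄;μν̄}`. -/
def sD : Pt n → ℂ := fun p => ∑ μ, ∑ ν, F.Ginv ν μ p * F.ricD μ ν p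

/-- The scalar curvature `s_∇ = G^{β̄α} G^{ν̄μ} R_{αβ̄μν̄}`. -/
def sR : Pt n → ℂ := fun p => ∑ μ, ∑ ν, F.Ginv ν μ p * F.ricR μ ν p

/-- The scalar curvature `s_{∇ᶜ} = G^{β̄α} G^{ν̄μ} K_{αβ̄μν̄}`. -/
def sK : Pt n → ℂ := fun p => ∑ μ, ∑ ν, F.Ginv ν μ p * F.ricK μ ν p

/-- `(𝔖 ∘ 𝔖̄)_{μν̄} = G^{β̄α} G^{λ̄γ} S_{αγν̄} conj (S_{βλμ̄})`. -/
def SS (μ ν : Fin n) : Pt n → ℂ := fun p =>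
  ∑ α, ∑ β, ∑ γ, ∑ l,
    F.Ginv β α p * F.Ginv l γ p * F.Shl α γ ν p * conj (F.Shl β l μ p)

/-- `⟨𝔖, 𝔖⟩ = G^{ν̄μ} (𝔖 ∘ 𝔖̄)_{μν̄}`. -/
def SnormSq : Pt n → ℂ := fun p => ∑ μ, ∑ ν, F.Ginv ν μ p * F.SS μ ν p

/-- `F` is a Kähler-Finsler metric: `Γ^α_{β;μ} = Γ^α_{μ;β}`. -/
def IsKaehler : Prop := ∀ (α β μ : Fin n), ∀ p ∈ slit n, F.Γh α β μ p = F.Γh α μ β p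

/-- `F` is a weakly Kähler-Finsler metric: `G_α (Γ^α_{β;μ} - Γ^α_{μ;β}) v^β = 0`. -/
def IsWeaklyKaehler : Prop := ∀ (μ : Fin n), ∀ p ∈ slit n,
  (∑ α, ∑ β, dv α F.Gc p * (F.Γh α β μ p - F.Γh α μ β p) * p.2 β) = 0

/-- The horizontal curvature `Ω̂^α_{β;μν̄} = -δ_ν̄(Γ^α_{β;μ})` of the
complex Rund connection. -/
def RundCurv (α β μ ν : Fin n) : Pt n → ℂ := fun p => -F.δhb ν (F.Γh α β μ) p

/-- `F` is Rund Kähler-Finsler-like: `Ω̂^α_{β;μν̄} = Ω̂^α_{μ;βν̄}`. -/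
def IsRundKL : Prop := ∀ (α β μ ν : Fin n), ∀ p ∈ slit n,
  F.RundCurv α β μ ν p = F.RundCurv α μ β ν p

/-- The holomorphic flag curvature `K_D(H)` of the Chern–Finsler connection
along the horizontal vector `H = H^α δ_α`. -/
def flagD (H : Fin n → ℂ) : Pt n → ℂ := fun p =>
  (∑ α, ∑ β, ∑ μ, ∑ ν, F.Om α β μ ν p * H α * conj (H β) * H μ * conj (H ν)) /
    (∑ α, ∑ β, F.Gm α β p * H α * conj (H β)) ^ 2

/-- The holomorphic flag curvature `K_∇(H)` of the canonical connection. -/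
def flagR (H : Fin n → ℂ) : Pt n → ℂ := fun p =>
  (∑ α, ∑ β, ∑ μ, ∑ ν, F.Rc α β μ ν p * H α * conj (H β) * H μ * conj (H ν)) /
    (∑ α, ∑ β, F.Gm α β p * H α * conj (H β)) ^ 2

/-- The holomorphic sectional curvature `K_D(v)` along `v`. -/
def holD : Pt n → ℂ := fun p =>
  (∑ α, ∑ β, ∑ μ, ∑ ν, F.Om α β μ ν p * p.2 α * conj (p.2 β) * p.2 μ * conj (p.2 ν)) /
    (F.Gc p) ^ 2

/-- The holomorphic sectional curvature `K_∇(v)` along `v`. -/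
def holR : Pt n → ℂ := fun p =>
  (∑ α, ∑ β, ∑ μ, ∑ ν, F.Rc α β μ ν p * p.2 α * conj (p.2 β) * p.2 μ * conj (p.2 ν)) /
    (F.Gc p) ^ 2

/-- The operator `∂_H` on horizontal `(p,q)`-forms. -/
def pH {p q : ℕ} (φ : HForm n p q) : HForm n (p + 1) q := fun I J x =>
  ∑ j : Fin (p + 1), (-1 : ℂ) ^ (j : ℕ) * F.δh (I j) (fun y => φ (I ∘ j.succAbove) J y) x

/-- The operator `∂̄_H` on horizontal `(p,q)`-forms. -/
def pHbar {p q : ℕ} (φ : HForm n p q) : HForm n p (q + 1) := fun I J x =>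
  (-1 : ℂ) ^ p *
    ∑ j : Fin (q + 1), (-1 : ℂ) ^ (j : ℕ) * F.δhb (J j) (fun y => φ I (J ∘ j.succAbove) y) x

/-- The horizontal fundamental form `ω_H = √-1 G_{αβ̄} dz^α ∧ dz̄^β`. -/
def omH : HForm n 1 1 := fun I J x => Complex.I * F.Gm (I 0) (J 0) x

/-- The wedge power `ω_H^k` (coefficient array in the `1/(k!k!)` convention). -/
def omPow (k : ℕ) : HForm n k k := fun I J x =>
  Complex.I ^ k * (-1 : ℂ) ^ (k * (k - 1) / 2) * (k.factorial : ℂ) *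
    ∑ σ : Equiv.Perm (Fin k), permSign σ * ∏ j, F.Gm (I j) (J (σ j)) x

/-- The pointwise Hermitian inner product `⟨·,·⟩_{PM̃}` on horizontal
`(p,q)`-forms induced by `(G_{αβ̄})`. -/
def hinner {p q : ℕ} (φ ψ : HForm n p q) : Pt n → ℂ := fun x =>
  (((p.factorial * q.factorial : ℕ) : ℂ))⁻¹ *
    ∑ I : Fin p → Fin n, ∑ J : Fin q → Fin n, ∑ I' : Fin p → Fin n, ∑ J' : Fin q → Fin n,
      φ I J x * (∏ i, F.Ginv (I' i) (I i) x) * (∏ j, F.Ginv (J' j) (J j) x) *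
        conj (ψ I' J' x)

/-- The `(0,1)`-form `∂_H^* ω_H = 2√-1 S_ᾱ dz̄^α`. -/
def pstarOmH : HForm n 0 1 := fun _ J x => 2 * Complex.I * conj (F.S1 (J 0) x)

/-- The `(1,0)`-form `∂̄_H^* ω_H = -2√-1 S_α dz^α`. -/
def pbarstarOmH : HForm n 1 0 := fun I _ x => -(2 * Complex.I) * F.S1 (I 0) x

/-- The horizontal `(1,0)`-form `𝒮 = S_α dz^α`. -/
def SForm : HForm n 1 0 := fun I _ x => F.S1 (I 0) x

/-- `F` is a balanced complex Finsler metric: `d_H^* ω_H = 0`, i.e. both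
`∂_H^* ω_H = 0` and `∂̄_H^* ω_H = 0`. -/
def IsBalanced : Prop :=
  (∀ (I : Fin 0 → Fin n) (J : Fin 1 → Fin n), ∀ x ∈ slit n, F.pstarOmH I J x = 0) ∧
  (∀ (I : Fin 1 → Fin n) (J : Fin 0 → Fin n), ∀ x ∈ slit n, F.pbarstarOmH I J x = 0)

end SPCF

/-- The invariant integral `∫_{PM̃} · dμ_{PM̃}` against the volume form
`dμ_{PM̃} = ω_V^{n-1}/(n-1)! ∧ ω_H^n/n!` of a **compact** strongly pseudoconvex
complex Finsler manifold, applied to `0`-homogeneous functions on `M̃`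
(i.e. functions on `PM̃`).  The existence of this structure encodes the
compactness of the base manifold `M`. -/
structure PTMIntegral {n : ℕ} (F : SPCF n) where
  integ : (Pt n → ℂ) → ℂ
  integ_add : ∀ f g : Pt n → ℂ, integ (fun x => f x + g x) = integ f + integ g
  integ_smul : ∀ (c : ℂ) (f : Pt n → ℂ), integ (fun x => c * f x) = c * integ f
  integ_conj : ∀ f : Pt n → ℂ, integ (fun x => conj (f x)) = conj (integ f)
  integ_nonneg : ∀ f : Pt n → ℂ, (∀ x ∈ slit n, 0 ≤ (f x).re ∧ (f x).im = 0) →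
    0 ≤ (integ f).re ∧ (integ f).im = 0
  integ_vanish : ∀ f : Pt n → ℂ, ContinuousOn f (slit n) →
    (∀ x ∈ slit n, 0 ≤ (f x).re ∧ (f x).im = 0) → integ f = 0 →
      ∀ x ∈ slit n, f x = 0

/-- `F̃ = e^{ρ/2} F` is a conformal change of `F` with smooth real factor `ρ`
on the base manifold, i.e. `G̃ = e^ρ G`. -/
def IsConformal (F Ft : SPCF n) (ρ : (Fin n → ℂ) → ℝ) : Prop :=
  ContDiff ℝ (⊤ : ℕ∞) ρ ∧ ∀ p : Pt n, Ft.G p = Real.exp (ρ p.1) * F.G p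

end CFG

open CFG

namespace CFGAux

variable {n : ℕ}

lemma isOpen_slit : IsOpen (slit n) :=
  isOpen_compl_iff.mpr (isClosed_singleton.preimage continuous_snd)

lemma slit_mem_nhds {p : Pt n} (hp : p ∈ slit n) : slit n ∈ nhds p :=
  isOpen_slit.mem_nhds hp

/-- Smooth on the slit bundle. -/
def Sm (f : Pt n → ℂ) : Prop := ContDiffOn ℝ (⊤ : ℕ∞) f (slit n)

lemma Sm.contDiffAt {f : Pt n → ℂ} (hf : Sm f) {p : Pt n} (hp : p ∈ slit n) :
    ContDiffAt ℝ (⊤ : ℕ∞) f p := ContDiffOn.contDiffAt hf (slit_mem_nhds hp)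

lemma Sm.diffAt {f : Pt n → ℂ} (hf : Sm f) {p : Pt n} (hp : p ∈ slit n) :
    DifferentiableAt ℝ f p := (hf.contDiffAt hp).differentiableAt (by simp)

lemma Sm.add {f g : Pt n → ℂ} (hf : Sm f) (hg : Sm g) : Sm (fun q => f q + g q) :=
  ContDiffOn.add hf hg

lemma Sm.mul {f g : Pt n → ℂ} (hf : Sm f) (hg : Sm g) : Sm (fun q => f q * g q) :=
  ContDiffOn.mul hf hg

lemma Sm.neg {f : Pt n → ℂ} (hf : Sm f) : Sm (fun q => -f q) := ContDiffOn.neg hf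

lemma Sm.sub {f g : Pt n → ℂ} (hf : Sm f) (hg : Sm g) : Sm (fun q => f q - g q) :=
  ContDiffOn.sub hf hg

lemma Sm.const (c : ℂ) : Sm (fun _ : Pt n => c) := contDiffOn_const

lemma Sm.const_mul {f : Pt n → ℂ} (hf : Sm f) (c : ℂ) : Sm (fun q => c * f q) :=
  (Sm.const c).mul hf

lemma Sm.sum {ι : Type*} {s : Finset ι} {f : ι → Pt n → ℂ}
    (hf : ∀ i ∈ s, Sm (f i)) : Sm (fun q => ∑ i ∈ s, f i q) := by
  classical
  induction s using Finset.induction with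
  | empty => simpa using Sm.const 0
  | insert _ _ hx ih =>
      rename_i a s
      simp only [Finset.sum_insert hx]
      exact (hf a (Finset.mem_insert_self a s)).add
        (ih (fun i hi => hf i (Finset.mem_insert_of_mem hi)))

lemma Sm.conj {f : Pt n → ℂ} (hf : Sm f) : Sm (fun q => conj (f q)) := by
  exact (Complex.conjCLE.contDiff.comp_contDiffOn hf : _)

lemma Sm.inv {f : Pt n → ℂ} (hf : Sm f) (h0 : ∀ p ∈ slit n, f p ≠ 0) :
    Sm (fun q => (f q)⁻¹) := ContDiffOn.inv hf h0

lemma Sm.fderiv_apply {f : Pt n → ℂ} (hf : Sm f) (w : Pt n) :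
    Sm (fun q => fderiv ℝ f q w) := by
  have h1 : ContDiffOn ℝ (⊤ : ℕ∞) (fderiv ℝ f) (slit n) :=
    hf.fderiv_of_isOpen isOpen_slit (by exact (by simp))
  exact h1.clm_apply contDiffOn_const

/-! ### Pointwise rules for `fderiv` applied to a vector -/

lemma pd_conj (f : Pt n → ℂ) (p w : Pt n) :
    fderiv ℝ (fun q => conj (f q)) p w = conj (fderiv ℝ f p w) := by
  have : (fun q => conj (f q)) = (⇑Complex.conjCLE ∘ f) := rfl
  rw [this, ContinuousLinearEquiv.comp_fderiv]
  rfl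

lemma pd_add {f g : Pt n → ℂ} {p : Pt n} (hf : DifferentiableAt ℝ f p)
    (hg : DifferentiableAt ℝ g p) (w : Pt n) :
    fderiv ℝ (fun q => f q + g q) p w = fderiv ℝ f p w + fderiv ℝ g p w := by
  rw [fderiv_fun_add hf hg]; rfl

lemma pd_mul {f g : Pt n → ℂ} {p : Pt n} (hf : DifferentiableAt ℝ f p)
    (hg : DifferentiableAt ℝ g p) (w : Pt n) :
    fderiv ℝ (fun q => f q * g q) p w
      = fderiv ℝ f p w * g p + f p * fderiv ℝ g p w := by
  rw [fderiv_fun_mul hf hg]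
  simp [smul_eq_mul]
  ring

lemma pd_neg (f : Pt n → ℂ) (p w : Pt n) :
    fderiv ℝ (fun q => -f q) p w = -fderiv ℝ f p w := by
  rw [fderiv_fun_neg]; rfl

lemma pd_sum {ι : Type*} {s : Finset ι} {f : ι → Pt n → ℂ} {p : Pt n}
    (hf : ∀ i ∈ s, DifferentiableAt ℝ (f i) p) (w : Pt n) :
    fderiv ℝ (fun q => ∑ i ∈ s, f i q) p w = ∑ i ∈ s, fderiv ℝ (f i) p w := by
  rw [fderiv_fun_sum hf]
  simp

lemma pd_congr {f g : Pt n → ℂ} {p : Pt n} (hp : p ∈ slit n)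
    (h : ∀ q ∈ slit n, f q = g q) (w : Pt n) :
    fderiv ℝ f p w = fderiv ℝ g p w := by
  have : f =ᶠ[nhds p] g := Filter.eventuallyEq_of_mem (slit_mem_nhds hp) h
  rw [this.fderiv_eq]


lemma dz_mul {f g : Pt n → ℂ} {p : Pt n} (hf : DifferentiableAt ℝ f p)
    (hg : DifferentiableAt ℝ g p) (μ : Fin n) :
    dz μ (fun q => f q * g q) p = dz μ f p * g p + f p * dz μ g p := by
  simp only [dz, pd_mul hf hg]; ring

lemma dz_neg (f : Pt n → ℂ) (p : Pt n) (μ : Fin n) :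
    dz μ (fun q => -f q) p = -dz μ f p := by
  simp only [dz, pd_neg]; ring

lemma dz_sum {ι : Type*} {s : Finset ι} {f : ι → Pt n → ℂ} {p : Pt n}
    (hf : ∀ i ∈ s, DifferentiableAt ℝ (f i) p) (μ : Fin n) :
    dz μ (fun q => ∑ i ∈ s, f i q) p = ∑ i ∈ s, dz μ (f i) p := by
  simp only [dz, pd_sum hf]
  rw [Finset.mul_sum, ← Finset.sum_sub_distrib, Finset.mul_sum]

lemma dz_congr {f g : Pt n → ℂ} {p : Pt n} (hp : p ∈ slit n)
    (h : ∀ q ∈ slit n, f q = g q) (μ : Fin n) :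
    dz μ f p = dz μ g p := by
  simp only [dz, pd_congr hp h]

lemma dz_const (c : ℂ) (p : Pt n) (μ : Fin n) : dz μ (fun _ => c) p = 0 := by
  simp [dz, fderiv_const]

lemma Sm.dz {f : Pt n → ℂ} (hf : Sm f) (μ : Fin n) : Sm (dz μ f) :=
  ((hf.fderiv_apply _).sub ((hf.fderiv_apply _).const_mul Complex.I)).const_mul _

lemma dzb_mul {f g : Pt n → ℂ} {p : Pt n} (hf : DifferentiableAt ℝ f p)
    (hg : DifferentiableAt ℝ g p) (μ : Fin n) :
    dzb μ (fun q => f q * g q) p = dzb μ f p * g p + f p * dzb μ g p := by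
  simp only [dzb, pd_mul hf hg]; ring

lemma dzb_add {f g : Pt n → ℂ} {p : Pt n} (hf : DifferentiableAt ℝ f p)
    (hg : DifferentiableAt ℝ g p) (μ : Fin n) :
    dzb μ (fun q => f q + g q) p = dzb μ f p + dzb μ g p := by
  simp only [dzb, pd_add hf hg]; ring

lemma dzb_neg (f : Pt n → ℂ) (p : Pt n) (μ : Fin n) :
    dzb μ (fun q => -f q) p = -dzb μ f p := by
  simp only [dzb, pd_neg]; ring

lemma dzb_sum {ι : Type*} {s : Finset ι} {f : ι → Pt n → ℂ} {p : Pt n}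
    (hf : ∀ i ∈ s, DifferentiableAt ℝ (f i) p) (μ : Fin n) :
    dzb μ (fun q => ∑ i ∈ s, f i q) p = ∑ i ∈ s, dzb μ (f i) p := by
  simp only [dzb, pd_sum hf]
  rw [Finset.mul_sum, ← Finset.sum_add_distrib, Finset.mul_sum]

lemma dzb_congr {f g : Pt n → ℂ} {p : Pt n} (hp : p ∈ slit n)
    (h : ∀ q ∈ slit n, f q = g q) (μ : Fin n) :
    dzb μ f p = dzb μ g p := by
  simp only [dzb, pd_congr hp h]

lemma dzb_const (c : ℂ) (p : Pt n) (μ : Fin n) : dzb μ (fun _ => c) p = 0 := by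
  simp [dzb, fderiv_const]

lemma Sm.dzb {f : Pt n → ℂ} (hf : Sm f) (μ : Fin n) : Sm (dzb μ f) :=
  ((hf.fderiv_apply _).add ((hf.fderiv_apply _).const_mul Complex.I)).const_mul _

lemma dv_mul {f g : Pt n → ℂ} {p : Pt n} (hf : DifferentiableAt ℝ f p)
    (hg : DifferentiableAt ℝ g p) (μ : Fin n) :
    dv μ (fun q => f q * g q) p = dv μ f p * g p + f p * dv μ g p := by
  simp only [dv, pd_mul hf hg]; ring

lemma dv_neg (f : Pt n → ℂ) (p : Pt n) (μ : Fin n) :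
    dv μ (fun q => -f q) p = -dv μ f p := by
  simp only [dv, pd_neg]; ring

lemma dv_sum {ι : Type*} {s : Finset ι} {f : ι → Pt n → ℂ} {p : Pt n}
    (hf : ∀ i ∈ s, DifferentiableAt ℝ (f i) p) (μ : Fin n) :
    dv μ (fun q => ∑ i ∈ s, f i q) p = ∑ i ∈ s, dv μ (f i) p := by
  simp only [dv, pd_sum hf]
  rw [Finset.mul_sum, ← Finset.sum_sub_distrib, Finset.mul_sum]

lemma dv_congr {f g : Pt n → ℂ} {p : Pt n} (hp : p ∈ slit n)
    (h : ∀ q ∈ slit n, f q = g q) (μ : Fin n) :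
    dv μ f p = dv μ g p := by
  simp only [dv, pd_congr hp h]

lemma dv_const (c : ℂ) (p : Pt n) (μ : Fin n) : dv μ (fun _ => c) p = 0 := by
  simp [dv, fderiv_const]

lemma Sm.dv {f : Pt n → ℂ} (hf : Sm f) (μ : Fin n) : Sm (dv μ f) :=
  ((hf.fderiv_apply _).sub ((hf.fderiv_apply _).const_mul Complex.I)).const_mul _

lemma dvb_mul {f g : Pt n → ℂ} {p : Pt n} (hf : DifferentiableAt ℝ f p)
    (hg : DifferentiableAt ℝ g p) (μ : Fin n) :
    dvb μ (fun q => f q * g q) p = dvb μ f p * g p + f p * dvb μ g p := by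
  simp only [dvb, pd_mul hf hg]; ring

lemma dvb_add {f g : Pt n → ℂ} {p : Pt n} (hf : DifferentiableAt ℝ f p)
    (hg : DifferentiableAt ℝ g p) (μ : Fin n) :
    dvb μ (fun q => f q + g q) p = dvb μ f p + dvb μ g p := by
  simp only [dvb, pd_add hf hg]; ring

lemma dvb_neg (f : Pt n → ℂ) (p : Pt n) (μ : Fin n) :
    dvb μ (fun q => -f q) p = -dvb μ f p := by
  simp only [dvb, pd_neg]; ring

lemma dvb_sum {ι : Type*} {s : Finset ι} {f : ι → Pt n → ℂ} {p : Pt n}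
    (hf : ∀ i ∈ s, DifferentiableAt ℝ (f i) p) (μ : Fin n) :
    dvb μ (fun q => ∑ i ∈ s, f i q) p = ∑ i ∈ s, dvb μ (f i) p := by
  simp only [dvb, pd_sum hf]
  rw [Finset.mul_sum, ← Finset.sum_add_distrib, Finset.mul_sum]

lemma dvb_congr {f g : Pt n → ℂ} {p : Pt n} (hp : p ∈ slit n)
    (h : ∀ q ∈ slit n, f q = g q) (μ : Fin n) :
    dvb μ f p = dvb μ g p := by
  simp only [dvb, pd_congr hp h]

lemma dvb_const (c : ℂ) (p : Pt n) (μ : Fin n) : dvb μ (fun _ => c) p = 0 := by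
  simp [dvb, fderiv_const]

lemma Sm.dvb {f : Pt n → ℂ} (hf : Sm f) (μ : Fin n) : Sm (dvb μ f) :=
  ((hf.fderiv_apply _).add ((hf.fderiv_apply _).const_mul Complex.I)).const_mul _

lemma conj_dz (f : Pt n → ℂ) (p : Pt n) (μ : Fin n) :
    conj (dz μ f p) = dzb μ (fun q => conj (f q)) p := by
  simp only [dz, dzb, pd_conj, map_mul, map_sub, map_add, map_div₀, map_one,
    map_ofNat, Complex.conj_I]
  ring

lemma conj_dv (f : Pt n → ℂ) (p : Pt n) (μ : Fin n) :
    conj (dv μ f p) = dvb μ (fun q => conj (f q)) p := by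
  simp only [dv, dvb, pd_conj, map_mul, map_sub, map_add, map_div₀, map_one,
    map_ofNat, Complex.conj_I]
  ring


lemma sum_mul_helper {m : ℕ} (c A B : Fin m → ℂ) (x y : ℂ) :
    ∑ α, c α * (A α * y + x * B α) = (∑ α, c α * A α) * y + x * ∑ α, c α * B α := by
  rw [Finset.sum_mul, Finset.mul_sum, ← Finset.sum_add_distrib]
  exact Finset.sum_congr rfl fun i _ => by ring

variable {F : SPCF n}

lemma δh_mul {f g : Pt n → ℂ} {p : Pt n} (hf : DifferentiableAt ℝ f p)
    (hg : DifferentiableAt ℝ g p) (μ : Fin n) :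
    F.δh μ (fun q => f q * g q) p = F.δh μ f p * g p + f p * F.δh μ g p := by
  simp only [SPCF.δh, dz_mul hf hg, dv_mul hf hg, sum_mul_helper]
  ring

lemma δhb_mul {f g : Pt n → ℂ} {p : Pt n} (hf : DifferentiableAt ℝ f p)
    (hg : DifferentiableAt ℝ g p) (μ : Fin n) :
    F.δhb μ (fun q => f q * g q) p = F.δhb μ f p * g p + f p * F.δhb μ g p := by
  simp only [SPCF.δhb, dzb_mul hf hg, dvb_mul hf hg, sum_mul_helper]
  ring

lemma δhb_add {f g : Pt n → ℂ} {p : Pt n} (hf : DifferentiableAt ℝ f p)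
    (hg : DifferentiableAt ℝ g p) (μ : Fin n) :
    F.δhb μ (fun q => f q + g q) p = F.δhb μ f p + F.δhb μ g p := by
  simp only [SPCF.δhb, dzb_add hf hg, dvb_add hf hg, mul_add, Finset.sum_add_distrib]
  ring

lemma δh_sum {ι : Type*} {s : Finset ι} {f : ι → Pt n → ℂ} {p : Pt n}
    (hf : ∀ i ∈ s, DifferentiableAt ℝ (f i) p) (μ : Fin n) :
    F.δh μ (fun q => ∑ i ∈ s, f i q) p = ∑ i ∈ s, F.δh μ (f i) p := by
  simp only [SPCF.δh, dz_sum hf, dv_sum hf, Finset.mul_sum]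
  rw [Finset.sum_comm, ← Finset.sum_sub_distrib]

lemma δhb_sum {ι : Type*} {s : Finset ι} {f : ι → Pt n → ℂ} {p : Pt n}
    (hf : ∀ i ∈ s, DifferentiableAt ℝ (f i) p) (μ : Fin n) :
    F.δhb μ (fun q => ∑ i ∈ s, f i q) p = ∑ i ∈ s, F.δhb μ (f i) p := by
  simp only [SPCF.δhb, dzb_sum hf, dvb_sum hf, Finset.mul_sum]
  rw [Finset.sum_comm, ← Finset.sum_sub_distrib]

lemma δh_congr {f g : Pt n → ℂ} {p : Pt n} (hp : p ∈ slit n)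
    (h : ∀ q ∈ slit n, f q = g q) (μ : Fin n) :
    F.δh μ f p = F.δh μ g p := by
  simp only [SPCF.δh, dz_congr hp h, dv_congr hp h]

lemma δhb_congr {f g : Pt n → ℂ} {p : Pt n} (hp : p ∈ slit n)
    (h : ∀ q ∈ slit n, f q = g q) (μ : Fin n) :
    F.δhb μ f p = F.δhb μ g p := by
  simp only [SPCF.δhb, dzb_congr hp h, dvb_congr hp h]

lemma δh_const (c : ℂ) (p : Pt n) (μ : Fin n) : F.δh μ (fun _ => c) p = 0 := by
  simp [SPCF.δh, dz_const, dv_const]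

lemma δhb_const (c : ℂ) (p : Pt n) (μ : Fin n) : F.δhb μ (fun _ => c) p = 0 := by
  simp [SPCF.δhb, dzb_const, dvb_const]

lemma δh_eqZero {f : Pt n → ℂ} {p : Pt n} (hp : p ∈ slit n)
    (h : ∀ q ∈ slit n, f q = 0) (μ : Fin n) : F.δh μ f p = 0 := by
  rw [δh_congr hp (g := fun _ => 0) (fun q hq => h q hq) μ]
  exact δh_const 0 p μ

lemma δhb_eqZero {f : Pt n → ℂ} {p : Pt n} (hp : p ∈ slit n)
    (h : ∀ q ∈ slit n, f q = 0) (μ : Fin n) : F.δhb μ f p = 0 := by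
  rw [δhb_congr hp (g := fun _ => 0) (fun q hq => h q hq) μ]
  exact δhb_const 0 p μ

lemma conj_δh (f : Pt n → ℂ) (p : Pt n) (μ : Fin n) :
    conj (F.δh μ f p) = F.δhb μ (fun q => conj (f q)) p := by
  simp only [SPCF.δh, SPCF.δhb, map_sub, map_sum, map_mul, conj_dz, conj_dv]

lemma pd_const_mul {f : Pt n → ℂ} {p : Pt n} (hf : DifferentiableAt ℝ f p)
    (c : ℂ) (w : Pt n) :
    fderiv ℝ (fun q => c * f q) p w = c * fderiv ℝ f p w := by
  rw [fderiv_const_mul hf c]; simp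

lemma conj_dvb (f : Pt n → ℂ) (p : Pt n) (μ : Fin n) :
    conj (dvb μ f p) = dv μ (fun q => conj (f q)) p := by
  have := conj_dv (fun q => conj (f q)) p μ
  simp only [Complex.conj_conj] at this
  rw [← this, Complex.conj_conj]

lemma clairaut {f : Pt n → ℂ} (hf : Sm f) {p : Pt n} (hp : p ∈ slit n) (α β : Fin n) :
    dv α (dvb β f) p = dvb β (dv α f) p := by
  have hd : ∀ w : Pt n, DifferentiableAt ℝ (fun q => fderiv ℝ f q w) p :=
    fun w => (hf.fderiv_apply w).diffAt hp
  have hB : DifferentiableAt ℝ (fderiv ℝ f) p :=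
    ((ContDiffOn.contDiffAt (hf.fderiv_of_isOpen isOpen_slit (by exact_mod_cast le_top))
      (slit_mem_nhds hp)).differentiableAt (by simp : ((⊤ : ℕ∞) : WithTop ℕ∞) ≠ 0))
  set B := fderiv ℝ (fderiv ℝ f) p with hBdef
  have hsym : ∀ v w : Pt n, B v w = B w v := by
    intro v w
    exact second_derivative_symmetric_of_eventually
      (Filter.eventually_of_mem (slit_mem_nhds hp)
        fun q hq => (Sm.diffAt hf hq).hasFDerivAt) hB.hasFDerivAt v w
  have hpd : ∀ w u : Pt n, fderiv ℝ (fun q => fderiv ℝ f q u) p w = B w u := by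
    intro w u
    rw [fderiv_clm_apply hB (differentiableAt_const u)]
    simp [hBdef]
  have comb : ∀ (x y w : Pt n) (c : ℂ),
      fderiv ℝ (fun q => (1/2 : ℂ) * (fderiv ℝ f q x + c * fderiv ℝ f q y)) p w
        = (1/2 : ℂ) * (B w x + c * B w y) := by
    intro x y w c
    rw [pd_const_mul ((hd x).fun_add ((hd y).const_mul c))]
    rw [pd_add (hd x) ((hd y).const_mul c)]
    rw [pd_const_mul (hd y)]
    rw [hpd, hpd]
  have comb' : ∀ (x y w : Pt n) (c : ℂ),
      fderiv ℝ (fun q => (1/2 : ℂ) * (fderiv ℝ f q x - c * fderiv ℝ f q y)) p w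
        = (1/2 : ℂ) * (B w x - c * B w y) := by
    intro x y w c
    have : (fun q => (1/2 : ℂ) * (fderiv ℝ f q x - c * fderiv ℝ f q y))
        = fun q => (1/2 : ℂ) * (fderiv ℝ f q x + (-c) * fderiv ℝ f q y) := by
      funext q; ring
    rw [this, comb]; ring
  have ed1 : dvb β f = fun q => (1/2 : ℂ) * (fderiv ℝ f q (0, Pi.single β 1)
      + Complex.I * fderiv ℝ f q (0, Pi.single β Complex.I)) := rfl
  have ed2 : dv α f = fun q => (1/2 : ℂ) * (fderiv ℝ f q (0, Pi.single α 1)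
      - Complex.I * fderiv ℝ f q (0, Pi.single α Complex.I)) := rfl
  simp only [dv, dvb, ed1, ed2]
  rw [comb, comb, comb', comb']
  rw [hsym (0, Pi.single α 1) (0, Pi.single β 1),
    hsym (0, Pi.single α 1) (0, Pi.single β Complex.I),
    hsym (0, Pi.single α Complex.I) (0, Pi.single β 1),
    hsym (0, Pi.single α Complex.I) (0, Pi.single β Complex.I)]
  ring

variable (F : SPCF n)

lemma Sm_Gc : Sm F.Gc := by
  have : F.Gc = (⇑Complex.ofRealCLM) ∘ F.G := rfl
  rw [this]
  exact Complex.ofRealCLM.contDiff.comp_contDiffOn F.smoothG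

lemma Sm_Gm (α β : Fin n) : Sm (F.Gm α β) := ((Sm_Gc F).dvb β).dv α

lemma conj_Gc (q : Pt n) : conj (F.Gc q) = F.Gc q := Complex.conj_ofReal _

lemma conj_Gm {p : Pt n} (hp : p ∈ slit n) (α β : Fin n) :
    conj (F.Gm α β p) = F.Gm β α p := by
  have h1 : conj (F.Gm α β p) = dvb α (fun q => conj (dvb β F.Gc q)) p := by
    rw [← conj_dv]; rfl
  have h2 : ∀ q : Pt n, conj (dvb β F.Gc q) = dv β F.Gc q := by
    intro q
    rw [conj_dvb]
    congr 1
    funext x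
    exact conj_Gc F x
  have h3 : (fun q => conj (dvb β F.Gc q)) = dv β F.Gc := funext h2
  rw [h1, h3]
  exact (clairaut (Sm_Gc F) hp β α).symm


lemma Sm.prod {ι : Type*} {s : Finset ι} {f : ι → Pt n → ℂ}
    (hf : ∀ i ∈ s, Sm (f i)) : Sm (fun q => ∏ i ∈ s, f i q) := by
  classical
  induction s using Finset.induction with
  | empty => simpa using Sm.const 1
  | insert _ _ hx ih =>
      rename_i a s
      simp only [Finset.prod_insert hx]
      exact (hf a (Finset.mem_insert_self a s)).mul
        (ih (fun i hi => hf i (Finset.mem_insert_of_mem hi)))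

lemma Levi_apply (p : Pt n) (α β : Fin n) : F.Levi p α β = F.Gm α β p := rfl

lemma posdef_re {p : Pt n} (hp : p ∈ slit n) {w : Fin n → ℂ} (hw : w ≠ 0) :
    0 < (∑ α, ∑ β, F.Gm α β p * w α * conj (w β)).re :=
  (F.posdef p hp w hw).1

lemma quad_ne_zero {p : Pt n} (hp : p ∈ slit n) {w : Fin n → ℂ} (hw : w ≠ 0) :
    (∑ α, ∑ β, F.Gm α β p * w α * conj (w β)) ≠ 0 := by
  intro h
  have := posdef_re F hp hw
  rw [h] at this
  simp at this

lemma det_ne {p : Pt n} (hp : p ∈ slit n) : (F.Levi p).det ≠ 0 := by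
  intro h0
  obtain ⟨v, hv0, hv⟩ := Matrix.exists_vecMul_eq_zero_iff.mpr h0
  have hq : (∑ α, ∑ β, F.Gm α β p * v α * conj (v β)) = 0 := by
    rw [Finset.sum_comm]
    have : ∀ β, ∑ α, F.Gm α β p * v α * conj (v β) = 0 := by
      intro β
      have hvb : Matrix.vecMul v (F.Levi p) β = 0 := congrFun hv β
      have : (∑ α, v α * F.Gm α β p) = 0 := hvb
      calc ∑ α, F.Gm α β p * v α * conj (v β)
          = (∑ α, v α * F.Gm α β p) * conj (v β) := by
            rw [Finset.sum_mul]; exact Finset.sum_congr rfl fun i _ => by ring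
        _ = 0 := by rw [this, zero_mul]
    simp [this]
  exact quad_ne_zero F hp hv0 hq

lemma isUnit_det {p : Pt n} (hp : p ∈ slit n) : IsUnit (F.Levi p).det :=
  isUnit_iff_ne_zero.mpr (det_ne F hp)

lemma Ginv_apply (l α : Fin n) (p : Pt n) : F.Ginv l α p = (F.Levi p)⁻¹ l α := rfl

lemma Ginv_Gm {p : Pt n} (hp : p ∈ slit n) (l β : Fin n) :
    ∑ g, F.Ginv l g p * F.Gm g β p = if l = β then 1 else 0 := by
  have h := Matrix.nonsing_inv_mul (F.Levi p) (isUnit_det F hp)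
  have := congrFun (congrFun h l) β
  rw [Matrix.mul_apply] at this
  simpa [Matrix.one_apply, Ginv_apply, Levi_apply] using this

lemma Sm_det : Sm (fun p => (F.Levi p).det) := by
  have : (fun p => (F.Levi p).det)
      = fun p => ∑ σ : Equiv.Perm (Fin n), ((Equiv.Perm.sign σ : ℤ) : ℂ) *
          ∏ i, F.Gm (σ i) i p := by
    funext p
    rw [Matrix.det_apply']
    rfl
  rw [this]
  exact Sm.sum fun σ _ => ((Sm.prod fun i _ => Sm_Gm F (σ i) i).const_mul _)

lemma Sm_adj (i j : Fin n) : Sm (fun p => (F.Levi p).adjugate i j) := by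
  have : (fun p => (F.Levi p).adjugate i j)
      = fun p => ∑ σ : Equiv.Perm (Fin n), ((Equiv.Perm.sign σ : ℤ) : ℂ) *
          ∏ k, (if σ k = j then Pi.single i 1 (k : Fin n) else F.Gm (σ k) k p) := by
    funext p
    rw [Matrix.adjugate_apply, Matrix.det_apply']
    congr 1
    funext σ
    congr 1
    exact Finset.prod_congr rfl fun k _ => by
      rw [Matrix.updateRow_apply]; rfl
  rw [this]
  refine Sm.sum fun σ _ => (Sm.prod fun k _ => ?_).const_mul _
  by_cases h : σ k = j
  · simp only [h, if_true]; exact Sm.const _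
  · simp only [h, if_false]; exact Sm_Gm F (σ k) k

lemma Sm_Ginv (l α : Fin n) : Sm (F.Ginv l α) := by
  have key : ∀ p ∈ slit n, F.Ginv l α p
      = ((F.Levi p).det)⁻¹ * (F.Levi p).adjugate l α := by
    intro p _
    rw [Ginv_apply, Matrix.inv_def, Matrix.smul_apply, Ring.inverse_eq_inv']
    rfl
  exact ContDiffOn.congr (((Sm_det F).inv (fun p hp => det_ne F hp)).mul (Sm_adj F l α)) key

lemma inv_quad_zero {p : Pt n} (hp : p ∈ slit n) {W : Fin n → ℂ}
    (h : (∑ σ, ∑ l, F.Ginv l σ p * W σ * conj (W l)) = 0) : W = 0 := by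
  classical
  by_contra hW
  set L := F.Levi p with hL
  set A := L⁻¹ with hA
  set v : Fin n → ℂ := Matrix.mulVec A W with hv
  set u : Fin n → ℂ := star v with huu
  have hLA : L * A = 1 := Matrix.mul_nonsing_inv L (isUnit_det F hp)
  have hLv : Matrix.mulVec L v = W := by
    rw [hv, Matrix.mulVec_mulVec, hLA, Matrix.one_mulVec]
  have hu0 : u ≠ 0 := by
    intro h0
    have hv0 : v = 0 := by
      funext i
      have := congrFun h0 i
      simp only [huu, Pi.star_apply, Pi.zero_apply] at this
      simpa using congrArg star this
    apply hW
    rw [← hLv, hv0, Matrix.mulVec_zero]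
  have hform : (∑ α, ∑ β, F.Gm α β p * u α * conj (u β)) = conj (∑ σ, ∑ l, F.Ginv l σ p * W σ * conj (W l)) := by
    have hcu : ∀ β, conj (u β) = v β := by
      intro β; simp [huu]
    calc ∑ α, ∑ β, F.Gm α β p * u α * conj (u β)
        = ∑ α, u α * ∑ β, L α β * v β := by
          refine Finset.sum_congr rfl fun α _ => ?_
          rw [Finset.mul_sum]
          refine Finset.sum_congr rfl fun β _ => ?_
          rw [hcu β]
          rw [show F.Gm α β p = L α β from rfl]
          ring
      _ = ∑ α, u α * W α := by
          refine Finset.sum_congr rfl fun α _ => ?_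
          congr 1
          exact congrFun hLv α
      _ = conj (∑ σ, ∑ l, F.Ginv l σ p * W σ * conj (W l)) := by
          simp only [map_sum, map_mul, Complex.conj_conj]
          rw [Finset.sum_comm]
          refine Finset.sum_congr rfl fun α _ => ?_
          have : u α = ∑ σ, conj (A α σ) * conj (W σ) := by
            simp only [huu, Pi.star_apply, hv, Matrix.mulVec, dotProduct]
            rw [show star (∑ σ, A α σ * W σ) = conj (∑ σ, A α σ * W σ) from rfl]
            simp [map_sum]
          rw [this, Finset.sum_mul]
          refine Finset.sum_congr rfl fun σ _ => ?_
          rw [show F.Ginv α σ p = A α σ from rfl]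
  have hpos := posdef_re F hp hu0
  rw [hform, h] at hpos
  simp at hpos


/-! ### Smoothness of the connection tensors -/

lemma Sm_Γ0 (α μ : Fin n) : Sm (F.Γ0 α μ) :=
  Sm.sum fun l _ => (Sm_Ginv F l α).mul (((Sm_Gc F).dvb l).dz μ)

lemma Sm_δh {f : Pt n → ℂ} (hf : Sm f) (μ : Fin n) : Sm (F.δh μ f) :=
  (hf.dz μ).sub (Sm.sum fun α _ => (Sm_Γ0 F α μ).mul (hf.dv α))

lemma Sm_δhb {f : Pt n → ℂ} (hf : Sm f) (ν : Fin n) : Sm (F.δhb ν f) :=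
  (hf.dzb ν).sub (Sm.sum fun α _ => ((Sm_Γ0 F α ν).conj).mul (hf.dvb α))

lemma Sm_Γh (α β μ : Fin n) : Sm (F.Γh α β μ) :=
  Sm.sum fun l _ => (Sm_Ginv F l α).mul (Sm_δh F (Sm_Gm F β l) μ)

lemma Sm_Lh (α β μ : Fin n) : Sm (F.Lh α β μ) :=
  (Sm.sum fun l _ => (Sm_Ginv F l α).mul
    ((Sm_δh F (Sm_Gm F β l) μ).add (Sm_δh F (Sm_Gm F μ l) β))).const_mul _

lemma Sm_Lhb (α β μ : Fin n) : Sm (F.Lhb α β μ) :=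
  (Sm.sum fun l _ => (Sm_Ginv F l α).mul
    ((Sm_δhb F (Sm_Gm F β l) μ).sub (Sm_δhb F (Sm_Gm F β μ) l))).const_mul _

lemma Sm_Sh (γ α β : Fin n) : Sm (F.Sh γ α β) :=
  ((Sm_Γh F γ α β).sub (Sm_Γh F γ β α)).const_mul _

/-! ### Generic sum manipulation lemmas -/

lemma sum4_swap13 (f : Fin n → Fin n → Fin n → Fin n → ℂ) :
    ∑ α, ∑ β, ∑ μ, ∑ ν, f α β μ ν = ∑ α, ∑ β, ∑ μ, ∑ ν, f μ β α ν := by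
  calc ∑ α, ∑ β, ∑ μ, ∑ ν, f α β μ ν
      = ∑ β, ∑ α, ∑ μ, ∑ ν, f α β μ ν := Finset.sum_comm
    _ = ∑ β, ∑ μ, ∑ α, ∑ ν, f α β μ ν :=
        Finset.sum_congr rfl fun β _ => Finset.sum_comm
    _ = ∑ μ, ∑ β, ∑ α, ∑ ν, f α β μ ν := Finset.sum_comm

lemma sum4_swap24 (f : Fin n → Fin n → Fin n → Fin n → ℂ) :
    ∑ α, ∑ β, ∑ μ, ∑ ν, f α β μ ν = ∑ α, ∑ β, ∑ μ, ∑ ν, f α ν μ β := by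
  refine Finset.sum_congr rfl fun α _ => ?_
  calc ∑ β, ∑ μ, ∑ ν, f α β μ ν
      = ∑ μ, ∑ β, ∑ ν, f α β μ ν := Finset.sum_comm
    _ = ∑ μ, ∑ ν, ∑ β, f α β μ ν :=
        Finset.sum_congr rfl fun μ _ => Finset.sum_comm
    _ = ∑ ν, ∑ μ, ∑ β, f α β μ ν := Finset.sum_comm

lemma sum4_antisym13 {f : Fin n → Fin n → Fin n → Fin n → ℂ}
    (h : ∀ α β μ ν, f α β μ ν = -f μ β α ν) :
    ∑ α, ∑ β, ∑ μ, ∑ ν, f α β μ ν = 0 := by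
  have key : (∑ α, ∑ β, ∑ μ, ∑ ν, f α β μ ν)
      = -(∑ α, ∑ β, ∑ μ, ∑ ν, f α β μ ν) := by
    calc ∑ α, ∑ β, ∑ μ, ∑ ν, f α β μ ν
        = ∑ α, ∑ β, ∑ μ, ∑ ν, f μ β α ν := sum4_swap13 f
      _ = ∑ α, ∑ β, ∑ μ, ∑ ν, -f α β μ ν :=
          Finset.sum_congr rfl fun α _ => Finset.sum_congr rfl fun β _ =>
            Finset.sum_congr rfl fun μ _ => Finset.sum_congr rfl fun ν _ =>
              h μ β α ν
      _ = -(∑ α, ∑ β, ∑ μ, ∑ ν, f α β μ ν) := by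
          simp only [Finset.sum_neg_distrib]
  have h2 : (∑ α, ∑ β, ∑ μ, ∑ ν, f α β μ ν)
      + (∑ α, ∑ β, ∑ μ, ∑ ν, f α β μ ν) = 0 := by
    nth_rewrite 1 [key]; ring
  rwa [add_self_eq_zero] at h2

lemma sum4_antisym24 {f : Fin n → Fin n → Fin n → Fin n → ℂ}
    (h : ∀ α β μ ν, f α β μ ν = -f α ν μ β) :
    ∑ α, ∑ β, ∑ μ, ∑ ν, f α β μ ν = 0 := by
  have key : (∑ α, ∑ β, ∑ μ, ∑ ν, f α β μ ν)
      = -(∑ α, ∑ β, ∑ μ, ∑ ν, f α β μ ν) := by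
    calc ∑ α, ∑ β, ∑ μ, ∑ ν, f α β μ ν
        = ∑ α, ∑ β, ∑ μ, ∑ ν, f α ν μ β := sum4_swap24 f
      _ = ∑ α, ∑ β, ∑ μ, ∑ ν, -f α β μ ν :=
          Finset.sum_congr rfl fun α _ => Finset.sum_congr rfl fun β _ =>
            Finset.sum_congr rfl fun μ _ => Finset.sum_congr rfl fun ν _ =>
              h α ν μ β
      _ = -(∑ α, ∑ β, ∑ μ, ∑ ν, f α β μ ν) := by
          simp only [Finset.sum_neg_distrib]
  have h2 : (∑ α, ∑ β, ∑ μ, ∑ ν, f α β μ ν)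
      + (∑ α, ∑ β, ∑ μ, ∑ ν, f α β μ ν) = 0 := by
    nth_rewrite 1 [key]; ring
  rwa [add_self_eq_zero] at h2

lemma sum5_out (g : Fin n → Fin n → Fin n → Fin n → Fin n → ℂ) :
    ∑ α, ∑ β, ∑ μ, ∑ ν, ∑ σ, g α β μ ν σ
      = ∑ σ, ∑ α, ∑ β, ∑ μ, ∑ ν, g α β μ ν σ := by
  calc ∑ α, ∑ β, ∑ μ, ∑ ν, ∑ σ, g α β μ ν σ
      = ∑ α, ∑ β, ∑ μ, ∑ σ, ∑ ν, g α β μ ν σ :=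
        Finset.sum_congr rfl fun α _ => Finset.sum_congr rfl fun β _ =>
          Finset.sum_congr rfl fun μ _ => Finset.sum_comm
    _ = ∑ α, ∑ β, ∑ σ, ∑ μ, ∑ ν, g α β μ ν σ :=
        Finset.sum_congr rfl fun α _ => Finset.sum_congr rfl fun β _ =>
          Finset.sum_comm
    _ = ∑ α, ∑ σ, ∑ β, ∑ μ, ∑ ν, g α β μ ν σ :=
        Finset.sum_congr rfl fun α _ => Finset.sum_comm
    _ = ∑ σ, ∑ α, ∑ β, ∑ μ, ∑ ν, g α β μ ν σ := Finset.sum_comm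

lemma sum_factor (M N : Fin n → Fin n → Fin n → ℂ) (H K : Fin n → ℂ) :
    ∑ α, ∑ β, ∑ μ, ∑ ν, ∑ σ, M σ α ν * N σ μ β * (H α * K β * H μ * K ν)
      = ∑ σ, (∑ α, ∑ ν, M σ α ν * H α * K ν) *
          (∑ μ, ∑ β, N σ μ β * H μ * K β) := by
  rw [sum5_out]
  refine Finset.sum_congr rfl fun σ _ => ?_
  rw [Finset.sum_mul_sum]
  refine Finset.sum_congr rfl fun α _ => ?_
  calc ∑ β, ∑ μ, ∑ ν, M σ α ν * N σ μ β * (H α * K β * H μ * K ν)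
      = ∑ μ, ∑ β, ∑ ν, M σ α ν * N σ μ β * (H α * K β * H μ * K ν) :=
        Finset.sum_comm
    _ = ∑ μ, ∑ ν, ∑ β, M σ α ν * N σ μ β * (H α * K β * H μ * K ν) :=
        Finset.sum_congr rfl fun μ _ => Finset.sum_comm
    _ = ∑ μ, (∑ ν, M σ α ν * H α * K ν) * (∑ β, N σ μ β * H μ * K β) := by
        refine Finset.sum_congr rfl fun μ _ => ?_
        rw [Finset.sum_mul_sum]
        refine Finset.sum_congr rfl fun ν _ => Finset.sum_congr rfl fun β _ => ?_
        ring

/-! ### The algebraic core of the contraction identity -/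

lemma sum_factor' (M N : Fin n → Fin n → Fin n → ℂ) (H : Fin n → ℂ) :
    ∑ α, ∑ β, ∑ μ, ∑ ν, ∑ σ,
        M σ α ν * N σ μ β * (H α * conj (H β) * H μ * conj (H ν))
      = ∑ σ, (∑ α, ∑ ν, M σ α ν * H α * conj (H ν)) *
          (∑ μ, ∑ β, N σ μ β * H μ * conj (H β)) :=
  sum_factor M N H (fun x => conj (H x))

lemma core (A G : Fin n → Fin n → ℂ)
    (Lb L d s t l' : Fin n → Fin n → Fin n → ℂ)
    (D1 D2 dt : Fin n → Fin n → Fin n → Fin n → ℂ)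
    (H : Fin n → ℂ)
    (hf1 : ∀ σ ν β, ∑ g, Lb g σ ν * G g β = t σ ν β)
    (ht : ∀ σ ν β, t σ ν β = -t σ β ν)
    (hf2 : ∀ σ μ β, ∑ g, L g σ μ * G g β = l' σ μ β)
    (hl : ∀ σ μ β, l' σ μ β = d μ σ β - s σ μ β)
    (hf3 : ∀ α μ ν β, ∑ g, D1 g α μ ν * G g β
      = dt μ α ν β - ∑ g, Lb g α ν * d μ g β)
    (hdt : ∀ μ α ν β, dt μ α ν β = -dt μ α β ν)
    (hD2 : ∀ g α μ ν, D2 g α μ ν = -D2 g μ α ν)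
    (hU : ∀ σ, ∑ α, ∑ ν, Lb σ α ν * H α * conj (H ν)
      = ∑ k, A k σ * conj (∑ μ, ∑ β, s k μ β * H μ * conj (H β))) :
    ∑ α, ∑ β, ∑ μ, ∑ ν,
      (∑ g, (D1 g α μ ν + D2 g α μ ν
          + ∑ σ, (Lb σ α ν * L g σ μ - L σ α μ * Lb g σ ν)) * G g β)
        * H α * conj (H β) * H μ * conj (H ν)
      = -∑ σ, ∑ k, A k σ * (∑ μ, ∑ β, s σ μ β * H μ * conj (H β))
          * conj (∑ μ, ∑ β, s k μ β * H μ * conj (H β)) := by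
  classical
  have hsplit : ∀ α β μ ν : Fin n,
      (∑ g, (D1 g α μ ν + D2 g α μ ν
          + ∑ σ, (Lb σ α ν * L g σ μ - L σ α μ * Lb g σ ν)) * G g β)
        * H α * conj (H β) * H μ * conj (H ν)
      = (∑ g, D1 g α μ ν * G g β) * H α * conj (H β) * H μ * conj (H ν)
        + ((∑ g, D2 g α μ ν * G g β) * H α * conj (H β) * H μ * conj (H ν)
        + (∑ g, (∑ σ, (Lb σ α ν * L g σ μ - L σ α μ * Lb g σ ν)) * G g β)
            * H α * conj (H β) * H μ * conj (H ν)) := by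
    intro α β μ ν
    simp only [add_mul, Finset.sum_add_distrib]
    ring
  have step1 : ∑ α, ∑ β, ∑ μ, ∑ ν,
      (∑ g, (D1 g α μ ν + D2 g α μ ν
          + ∑ σ, (Lb σ α ν * L g σ μ - L σ α μ * Lb g σ ν)) * G g β)
        * H α * conj (H β) * H μ * conj (H ν)
      = (∑ α, ∑ β, ∑ μ, ∑ ν,
          (∑ g, D1 g α μ ν * G g β) * H α * conj (H β) * H μ * conj (H ν))
        + ((∑ α, ∑ β, ∑ μ, ∑ ν,
          (∑ g, D2 g α μ ν * G g β) * H α * conj (H β) * H μ * conj (H ν))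
        + ∑ α, ∑ β, ∑ μ, ∑ ν,
          (∑ g, (∑ σ, (Lb σ α ν * L g σ μ - L σ α μ * Lb g σ ν)) * G g β)
            * H α * conj (H β) * H μ * conj (H ν)) := by
    simp only [← Finset.sum_add_distrib]
    exact Finset.sum_congr rfl fun α _ => Finset.sum_congr rfl fun β _ =>
      Finset.sum_congr rfl fun μ _ => Finset.sum_congr rfl fun ν _ =>
        hsplit α β μ ν
  rw [step1]
  -- the D2 piece vanishes
  have e2 : ∀ α β μ ν : Fin n,
      (∑ g, D2 g α μ ν * G g β) = -(∑ g, D2 g μ α ν * G g β) := by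
    intro α β μ ν
    rw [← Finset.sum_neg_distrib]
    exact Finset.sum_congr rfl fun g _ => by rw [hD2 g α μ ν]; ring
  have hS2 : (∑ α, ∑ β, ∑ μ, ∑ ν,
      (∑ g, D2 g α μ ν * G g β) * H α * conj (H β) * H μ * conj (H ν)) = 0 := by
    refine sum4_antisym13 fun α β μ ν => ?_
    rw [e2 α β μ ν]; ring
  -- the D1 piece
  have hS1 : (∑ α, ∑ β, ∑ μ, ∑ ν,
      (∑ g, D1 g α μ ν * G g β) * H α * conj (H β) * H μ * conj (H ν))
      = 0 - ∑ α, ∑ β, ∑ μ, ∑ ν,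
          (∑ g, Lb g α ν * d μ g β) * H α * conj (H β) * H μ * conj (H ν) := by
    have hterm : ∀ α β μ ν : Fin n,
        (∑ g, D1 g α μ ν * G g β) * H α * conj (H β) * H μ * conj (H ν)
        = dt μ α ν β * H α * conj (H β) * H μ * conj (H ν)
          - (∑ g, Lb g α ν * d μ g β) * H α * conj (H β) * H μ * conj (H ν) := by
      intro α β μ ν
      rw [hf3 α μ ν β]; ring
    calc ∑ α, ∑ β, ∑ μ, ∑ ν,
        (∑ g, D1 g α μ ν * G g β) * H α * conj (H β) * H μ * conj (H ν)
        = ∑ α, ∑ β, ∑ μ, ∑ ν,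
            (dt μ α ν β * H α * conj (H β) * H μ * conj (H ν)
            - (∑ g, Lb g α ν * d μ g β) * H α * conj (H β) * H μ * conj (H ν)) :=
          Finset.sum_congr rfl fun α _ => Finset.sum_congr rfl fun β _ =>
            Finset.sum_congr rfl fun μ _ => Finset.sum_congr rfl fun ν _ =>
              hterm α β μ ν
      _ = (∑ α, ∑ β, ∑ μ, ∑ ν,
            dt μ α ν β * H α * conj (H β) * H μ * conj (H ν))
          - ∑ α, ∑ β, ∑ μ, ∑ ν,
            (∑ g, Lb g α ν * d μ g β) * H α * conj (H β) * H μ * conj (H ν) := by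
          simp only [Finset.sum_sub_distrib]
      _ = 0 - ∑ α, ∑ β, ∑ μ, ∑ ν,
            (∑ g, Lb g α ν * d μ g β) * H α * conj (H β) * H μ * conj (H ν) := by
          congr 1
          refine sum4_antisym24 fun α β μ ν => ?_
          rw [hdt μ α ν β]; ring
  rw [hS1, hS2]
  -- the quadratic piece
  have e3 : ∀ α β μ ν : Fin n,
      (∑ g, (∑ σ, (Lb σ α ν * L g σ μ - L σ α μ * Lb g σ ν)) * G g β)
      = (∑ σ, Lb σ α ν * l' σ μ β) - ∑ σ, L σ α μ * t σ ν β := by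
    intro α β μ ν
    calc ∑ g, (∑ σ, (Lb σ α ν * L g σ μ - L σ α μ * Lb g σ ν)) * G g β
        = ∑ g, ∑ σ, (Lb σ α ν * (L g σ μ * G g β)
            - L σ α μ * (Lb g σ ν * G g β)) := by
          refine Finset.sum_congr rfl fun g _ => ?_
          rw [Finset.sum_mul]
          exact Finset.sum_congr rfl fun σ _ => by ring
      _ = ∑ σ, ∑ g, (Lb σ α ν * (L g σ μ * G g β)
            - L σ α μ * (Lb g σ ν * G g β)) := Finset.sum_comm
      _ = ∑ σ, (Lb σ α ν * ∑ g, L g σ μ * G g β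
            - L σ α μ * ∑ g, Lb g σ ν * G g β) := by
          refine Finset.sum_congr rfl fun σ _ => ?_
          rw [Finset.sum_sub_distrib, Finset.mul_sum, Finset.mul_sum]
      _ = ∑ σ, (Lb σ α ν * l' σ μ β - L σ α μ * t σ ν β) := by
          refine Finset.sum_congr rfl fun σ _ => ?_
          rw [hf1 σ ν β, hf2 σ μ β]
      _ = (∑ σ, Lb σ α ν * l' σ μ β) - ∑ σ, L σ α μ * t σ ν β := by
          rw [Finset.sum_sub_distrib]
  have step3 : ∑ α, ∑ β, ∑ μ, ∑ ν,
      (∑ g, (∑ σ, (Lb σ α ν * L g σ μ - L σ α μ * Lb g σ ν)) * G g β)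
        * H α * conj (H β) * H μ * conj (H ν)
      = (∑ α, ∑ β, ∑ μ, ∑ ν,
          (∑ σ, Lb σ α ν * l' σ μ β) * H α * conj (H β) * H μ * conj (H ν))
        - ∑ α, ∑ β, ∑ μ, ∑ ν,
          (∑ σ, L σ α μ * t σ ν β) * H α * conj (H β) * H μ * conj (H ν) := by
    simp only [← Finset.sum_sub_distrib]
    exact Finset.sum_congr rfl fun α _ => Finset.sum_congr rfl fun β _ =>
      Finset.sum_congr rfl fun μ _ => Finset.sum_congr rfl fun ν _ => by
        rw [e3 α β μ ν]; ring
  rw [step3]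
  have hS3b : (∑ α, ∑ β, ∑ μ, ∑ ν,
      (∑ σ, L σ α μ * t σ ν β) * H α * conj (H β) * H μ * conj (H ν)) = 0 := by
    refine sum4_antisym24 fun α β μ ν => ?_
    have : (∑ σ, L σ α μ * t σ ν β) = -(∑ σ, L σ α μ * t σ β ν) := by
      rw [← Finset.sum_neg_distrib]
      exact Finset.sum_congr rfl fun σ _ => by rw [ht σ ν β]; ring
    rw [this]; ring
  rw [hS3b]
  -- assemble
  have hcomb : (∑ α, ∑ β, ∑ μ, ∑ ν,
      (∑ σ, Lb σ α ν * l' σ μ β) * H α * conj (H β) * H μ * conj (H ν))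
      - (∑ α, ∑ β, ∑ μ, ∑ ν,
      (∑ g, Lb g α ν * d μ g β) * H α * conj (H β) * H μ * conj (H ν))
      = -∑ σ, ∑ k, A k σ * (∑ μ, ∑ β, s σ μ β * H μ * conj (H β))
          * conj (∑ μ, ∑ β, s k μ β * H μ * conj (H β)) := by
    calc (∑ α, ∑ β, ∑ μ, ∑ ν,
        (∑ σ, Lb σ α ν * l' σ μ β) * H α * conj (H β) * H μ * conj (H ν))
        - (∑ α, ∑ β, ∑ μ, ∑ ν,
        (∑ g, Lb g α ν * d μ g β) * H α * conj (H β) * H μ * conj (H ν))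
        = ∑ α, ∑ β, ∑ μ, ∑ ν, -∑ σ,
            Lb σ α ν * s σ μ β * (H α * conj (H β) * H μ * conj (H ν)) := by
          simp only [← Finset.sum_sub_distrib]
          refine Finset.sum_congr rfl fun α _ => Finset.sum_congr rfl fun β _ =>
            Finset.sum_congr rfl fun μ _ => Finset.sum_congr rfl fun ν _ => ?_
          simp only [Finset.sum_mul]
          rw [← Finset.sum_sub_distrib, ← Finset.sum_neg_distrib]
          refine Finset.sum_congr rfl fun σ _ => ?_
          rw [hl σ μ β]; ring
      _ = -∑ α, ∑ β, ∑ μ, ∑ ν, ∑ σ,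
            Lb σ α ν * s σ μ β * (H α * conj (H β) * H μ * conj (H ν)) := by
          simp only [Finset.sum_neg_distrib]
      _ = -∑ σ, (∑ α, ∑ ν, Lb σ α ν * H α * conj (H ν)) *
            (∑ μ, ∑ β, s σ μ β * H μ * conj (H β)) := by
          rw [sum_factor']
      _ = -∑ σ, ∑ k, A k σ * (∑ μ, ∑ β, s σ μ β * H μ * conj (H β))
            * conj (∑ μ, ∑ β, s k μ β * H μ * conj (H β)) := by
          congr 1
          refine Finset.sum_congr rfl fun σ _ => ?_
          rw [hU σ, Finset.sum_mul]
          refine Finset.sum_congr rfl fun k _ => ?_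
          ring
  rw [← hcomb]
  ring

/-! ### Geometric identities -/

lemma δh_neg {f : Pt n → ℂ} (p : Pt n) (μ : Fin n) :
    F.δh μ (fun q => -f q) p = -F.δh μ f p := by
  simp only [SPCF.δh, dz_neg, dv_neg, mul_neg, Finset.sum_neg_distrib]
  ring

lemma δhb_neg {f : Pt n → ℂ} (p : Pt n) (μ : Fin n) :
    F.δhb μ (fun q => -f q) p = -F.δhb μ f p := by
  simp only [SPCF.δhb, dzb_neg, dvb_neg, mul_neg, Finset.sum_neg_distrib]
  ring

/-- (I1): `δ_μ G_{αβ̄} = Γ^g_{α;μ} G_{gβ̄}`. -/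
lemma δh_Gm {q : Pt n} (hq : q ∈ slit n) (α β μ : Fin n) :
    F.δh μ (F.Gm α β) q = ∑ g, F.Γh g α μ q * F.Gm g β q := by
  calc F.δh μ (F.Gm α β) q
      = ∑ l, F.δh μ (F.Gm α l) q * (if l = β then (1:ℂ) else 0) := by
        simp
    _ = ∑ l, F.δh μ (F.Gm α l) q * (∑ g, F.Ginv l g q * F.Gm g β q) :=
        Finset.sum_congr rfl fun l _ => by rw [Ginv_Gm F hq l β]
    _ = ∑ l, ∑ g, F.Ginv l g q * F.δh μ (F.Gm α l) q * F.Gm g β q := by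
        refine Finset.sum_congr rfl fun l _ => ?_
        rw [Finset.mul_sum]
        exact Finset.sum_congr rfl fun g _ => by ring
    _ = ∑ g, ∑ l, F.Ginv l g q * F.δh μ (F.Gm α l) q * F.Gm g β q :=
        Finset.sum_comm
    _ = ∑ g, F.Γh g α μ q * F.Gm g β q := by
        refine Finset.sum_congr rfl fun g _ => ?_
        rw [SPCF.Γh, Finset.sum_mul]

/-- (I3): `Γ = L + S`. -/
lemma Γh_split (g α μ : Fin n) (q : Pt n) :
    F.Γh g α μ q = F.Lh g α μ q + F.Sh g α μ q := by
  have : F.Lh g α μ q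
      = (1/2 : ℂ) * (F.Γh g α μ q + F.Γh g μ α q) := by
    rw [SPCF.Lh, SPCF.Γh, SPCF.Γh, ← Finset.sum_add_distrib]
    congr 1
    exact Finset.sum_congr rfl fun l _ => by ring
  rw [this, SPCF.Sh]
  ring

/-- (I4'): lowered `Lhb`. -/
lemma Lhb_lowered {q : Pt n} (hq : q ∈ slit n) (σ ν β : Fin n) :
    ∑ g, F.Lhb g σ ν q * F.Gm g β q
      = (1/2 : ℂ) * (F.δhb ν (F.Gm σ β) q - F.δhb β (F.Gm σ ν) q) := by
  calc ∑ g, F.Lhb g σ ν q * F.Gm g β q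
      = ∑ g, ∑ l, (1/2 : ℂ) * (F.Ginv l g q
          * (F.δhb ν (F.Gm σ l) q - F.δhb l (F.Gm σ ν) q) * F.Gm g β q) := by
        refine Finset.sum_congr rfl fun g _ => ?_
        rw [SPCF.Lhb, Finset.mul_sum, Finset.sum_mul]
        exact Finset.sum_congr rfl fun l _ => by ring
    _ = ∑ l, ∑ g, (1/2 : ℂ) * (F.Ginv l g q
          * (F.δhb ν (F.Gm σ l) q - F.δhb l (F.Gm σ ν) q) * F.Gm g β q) :=
        Finset.sum_comm
    _ = ∑ l, (1/2 : ℂ) * ((F.δhb ν (F.Gm σ l) q - F.δhb l (F.Gm σ ν) q)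
          * ∑ g, F.Ginv l g q * F.Gm g β q) := by
        refine Finset.sum_congr rfl fun l _ => ?_
        rw [Finset.mul_sum, Finset.mul_sum]
        exact Finset.sum_congr rfl fun g _ => by ring
    _ = ∑ l, (1/2 : ℂ) * ((F.δhb ν (F.Gm σ l) q - F.δhb l (F.Gm σ ν) q)
          * (if l = β then 1 else 0)) :=
        Finset.sum_congr rfl fun l _ => by rw [Ginv_Gm F hq l β]
    _ = (1/2 : ℂ) * (F.δhb ν (F.Gm σ β) q - F.δhb β (F.Gm σ ν) q) := by
        simp

/-- (I5'): lowered `Lh`. -/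
lemma Lh_lowered {q : Pt n} (hq : q ∈ slit n) (σ μ β : Fin n) :
    ∑ g, F.Lh g σ μ q * F.Gm g β q
      = (1/2 : ℂ) * (F.δh μ (F.Gm σ β) q + F.δh σ (F.Gm μ β) q) := by
  calc ∑ g, F.Lh g σ μ q * F.Gm g β q
      = ∑ g, ∑ l, (1/2 : ℂ) * (F.Ginv l g q
          * (F.δh μ (F.Gm σ l) q + F.δh σ (F.Gm μ l) q) * F.Gm g β q) := by
        refine Finset.sum_congr rfl fun g _ => ?_
        rw [SPCF.Lh, Finset.mul_sum, Finset.sum_mul]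
        exact Finset.sum_congr rfl fun l _ => by ring
    _ = ∑ l, ∑ g, (1/2 : ℂ) * (F.Ginv l g q
          * (F.δh μ (F.Gm σ l) q + F.δh σ (F.Gm μ l) q) * F.Gm g β q) :=
        Finset.sum_comm
    _ = ∑ l, (1/2 : ℂ) * ((F.δh μ (F.Gm σ l) q + F.δh σ (F.Gm μ l) q)
          * ∑ g, F.Ginv l g q * F.Gm g β q) := by
        refine Finset.sum_congr rfl fun l _ => ?_
        rw [Finset.mul_sum, Finset.mul_sum]
        exact Finset.sum_congr rfl fun g _ => by ring
    _ = ∑ l, (1/2 : ℂ) * ((F.δh μ (F.Gm σ l) q + F.δh σ (F.Gm μ l) q)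
          * (if l = β then 1 else 0)) :=
        Finset.sum_congr rfl fun l _ => by rw [Ginv_Gm F hq l β]
    _ = (1/2 : ℂ) * (F.δh μ (F.Gm σ β) q + F.δh σ (F.Gm μ β) q) := by
        simp

lemma conj_Shl {q : Pt n} (hq : q ∈ slit n) (k μ β : Fin n) :
    conj (F.Shl k μ β q)
      = (1/2 : ℂ) * (F.δhb μ (F.Gm β k) q - F.δhb k (F.Gm β μ) q) := by
  have h1 : conj (F.δh μ (F.Gm k β) q) = F.δhb μ (F.Gm β k) q := by
    rw [conj_δh]
    exact δhb_congr hq (fun x hx => conj_Gm F hx k β) μ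
  have h2 : conj (F.δh k (F.Gm μ β) q) = F.δhb k (F.Gm β μ) q := by
    rw [conj_δh]
    exact δhb_congr hq (fun x hx => conj_Gm F hx μ β) k
  rw [SPCF.Shl]
  rw [map_mul, map_sub, h1, h2]
  congr 1
  simp [Complex.ext_iff]

/-- (I2): `Ω_{αβ̄;μν̄} = -δ_ν̄(Γ^g_{α;μ}) G_{gβ̄} - G_{αβ̄σ} δ_ν̄(Γ^σ_{;μ})`. -/
lemma Om_eq {p : Pt n} (hp : p ∈ slit n) (α β μ ν : Fin n) :
    F.Om α β μ ν p
      = -(∑ g, F.δhb ν (F.Γh g α μ) p * F.Gm g β p)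
        - ∑ σ, F.Gm3 α β σ p * F.δhb ν (F.Γ0 σ μ) p := by
  have key : F.δhb ν (F.δh μ (F.Gm α β)) p
      = ∑ g, (F.δhb ν (F.Γh g α μ) p * F.Gm g β p
          + F.Γh g α μ p * F.δhb ν (F.Gm g β) p) := by
    rw [δhb_congr hp (fun q hq => δh_Gm F hq α β μ) ν]
    rw [δhb_sum (fun g _ => ((Sm_Γh F g α μ).mul (Sm_Gm F g β)).diffAt hp) ν]
    exact Finset.sum_congr rfl fun g _ =>
      δhb_mul ((Sm_Γh F g α μ).diffAt hp) ((Sm_Gm F g β).diffAt hp) ν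
  have h2 : (∑ l, ∑ k, F.δh μ (F.Gm α l) p * F.Ginv l k p * F.δhb ν (F.Gm k β) p)
      = ∑ k, F.Γh k α μ p * F.δhb ν (F.Gm k β) p := by
    rw [Finset.sum_comm]
    refine Finset.sum_congr rfl fun k _ => ?_
    rw [SPCF.Γh, Finset.sum_mul]
    exact Finset.sum_congr rfl fun l _ => by ring
  rw [SPCF.Om, key, h2, Finset.sum_add_distrib]
  ring

/-- (I6): the decomposition of `R - Ω`. -/
lemma Rc_sub_Om {p : Pt n} (hp : p ∈ slit n) (α β μ ν : Fin n) :
    F.Rc α β μ ν p - F.Om α β μ ν p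
      = ∑ g, (F.δh μ (F.Lhb g α ν) p + F.δhb ν (F.Sh g α μ) p
          + ∑ σ, (F.Lhb σ α ν p * F.Lh g σ μ p - F.Lh σ α μ p * F.Lhb g σ ν p))
          * F.Gm g β p := by
  have hZ : ∀ g, F.δhb ν (F.Γh g α μ) p
      = F.δhb ν (F.Lh g α μ) p + F.δhb ν (F.Sh g α μ) p := by
    intro g
    rw [δhb_congr hp (g := fun q => F.Lh g α μ q + F.Sh g α μ q)
      (fun q _ => Γh_split F g α μ q) ν]
    exact δhb_add ((Sm_Lh F g α μ).diffAt hp) ((Sm_Sh F g α μ).diffAt hp) ν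
  rw [SPCF.Rc, Om_eq F hp]
  have : ∀ X GT S2 : ℂ, (X - GT) - (-S2 - GT) = X + S2 := by intros; ring
  rw [this]
  rw [← Finset.sum_add_distrib]
  refine Finset.sum_congr rfl fun g _ => ?_
  rw [hZ g]
  ring

lemma hU_lemma {p : Pt n} (hp : p ∈ slit n) (H : Fin n → ℂ) (σ : Fin n) :
    ∑ α, ∑ ν, F.Lhb σ α ν p * H α * conj (H ν)
      = ∑ k, F.Ginv k σ p
          * conj (∑ μ, ∑ β, F.Shl k μ β p * H μ * conj (H β)) := by
  calc ∑ α, ∑ ν, F.Lhb σ α ν p * H α * conj (H ν)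
      = ∑ α, ∑ ν, ∑ k, F.Ginv k σ p * ((1/2 : ℂ)
          * (F.δhb ν (F.Gm α k) p - F.δhb k (F.Gm α ν) p) * (H α * conj (H ν))) := by
        refine Finset.sum_congr rfl fun α _ => Finset.sum_congr rfl fun ν _ => ?_
        rw [SPCF.Lhb]
        simp only [Finset.mul_sum, Finset.sum_mul]
        exact Finset.sum_congr rfl fun k _ => by ring
    _ = ∑ α, ∑ k, ∑ ν, F.Ginv k σ p * ((1/2 : ℂ)
          * (F.δhb ν (F.Gm α k) p - F.δhb k (F.Gm α ν) p) * (H α * conj (H ν))) :=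
        Finset.sum_congr rfl fun α _ => Finset.sum_comm
    _ = ∑ k, ∑ α, ∑ ν, F.Ginv k σ p * ((1/2 : ℂ)
          * (F.δhb ν (F.Gm α k) p - F.δhb k (F.Gm α ν) p) * (H α * conj (H ν))) :=
        Finset.sum_comm
    _ = ∑ k, F.Ginv k σ p
        * conj (∑ μ, ∑ β, F.Shl k μ β p * H μ * conj (H β)) := by
        refine Finset.sum_congr rfl fun k _ => ?_
        have hconj : conj (∑ μ, ∑ β, F.Shl k μ β p * H μ * conj (H β))
            = ∑ μ, ∑ β, (1/2 : ℂ)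
                * (F.δhb μ (F.Gm β k) p - F.δhb k (F.Gm β μ) p)
                * (conj (H μ) * H β) := by
          simp only [map_sum, map_mul, Complex.conj_conj]
          refine Finset.sum_congr rfl fun μ _ => Finset.sum_congr rfl fun β _ => ?_
          rw [conj_Shl F hp k μ β]
          ring
        rw [hconj, Finset.mul_sum]
        rw [Finset.sum_comm]
        refine Finset.sum_congr rfl fun α _ => ?_
        rw [Finset.mul_sum]
        refine Finset.sum_congr rfl fun ν _ => ?_
        ring

lemma contraction {p : Pt n} (hp : p ∈ slit n) (H : Fin n → ℂ) :
    (∑ α, ∑ β, ∑ μ, ∑ ν,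
        F.Rc α β μ ν p * H α * conj (H β) * H μ * conj (H ν))
      - (∑ α, ∑ β, ∑ μ, ∑ ν,
        F.Om α β μ ν p * H α * conj (H β) * H μ * conj (H ν))
    = -∑ σ, ∑ k, F.Ginv k σ p
        * (∑ μ, ∑ β, F.Shl σ μ β p * H μ * conj (H β))
        * conj (∑ μ, ∑ β, F.Shl k μ β p * H μ * conj (H β)) := by
  have step1 : (∑ α, ∑ β, ∑ μ, ∑ ν,
        F.Rc α β μ ν p * H α * conj (H β) * H μ * conj (H ν))
      - (∑ α, ∑ β, ∑ μ, ∑ ν,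
        F.Om α β μ ν p * H α * conj (H β) * H μ * conj (H ν))
      = ∑ α, ∑ β, ∑ μ, ∑ ν,
          (∑ g, (F.δh μ (F.Lhb g α ν) p + F.δhb ν (F.Sh g α μ) p
            + ∑ σ, (F.Lhb σ α ν p * F.Lh g σ μ p - F.Lh σ α μ p * F.Lhb g σ ν p))
            * F.Gm g β p) * H α * conj (H β) * H μ * conj (H ν) := by
    simp only [← Finset.sum_sub_distrib]
    refine Finset.sum_congr rfl fun α _ => Finset.sum_congr rfl fun β _ =>
      Finset.sum_congr rfl fun μ _ => Finset.sum_congr rfl fun ν _ => ?_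
    calc F.Rc α β μ ν p * H α * conj (H β) * H μ * conj (H ν)
          - F.Om α β μ ν p * H α * conj (H β) * H μ * conj (H ν)
        = (F.Rc α β μ ν p - F.Om α β μ ν p)
            * H α * conj (H β) * H μ * conj (H ν) := by ring
      _ = _ := by rw [Rc_sub_Om F hp α β μ ν]
  rw [step1]
  -- instantiate the algebraic core
  have ht' : ∀ σ ν β : Fin n,
      (1/2 : ℂ) * (F.δhb ν (F.Gm σ β) p - F.δhb β (F.Gm σ ν) p)
        = -((1/2 : ℂ) * (F.δhb β (F.Gm σ ν) p - F.δhb ν (F.Gm σ β) p)) :=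
    fun σ ν β => by ring
  have hl' : ∀ σ μ β : Fin n,
      (1/2 : ℂ) * (F.δh μ (F.Gm σ β) p + F.δh σ (F.Gm μ β) p)
        = F.δh μ (F.Gm σ β) p - F.Shl σ μ β p := by
    intro σ μ β
    rw [SPCF.Shl]
    ring
  have hf3' : ∀ α μ ν β : Fin n,
      ∑ g, F.δh μ (F.Lhb g α ν) p * F.Gm g β p
        = F.δh μ (fun q => (1/2 : ℂ)
            * (F.δhb ν (F.Gm α β) q - F.δhb β (F.Gm α ν) q)) p
          - ∑ g, F.Lhb g α ν p * F.δh μ (F.Gm g β) p := by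
    intro α μ ν β
    have hprod : F.δh μ (fun q => ∑ g, F.Lhb g α ν q * F.Gm g β q) p
        = ∑ g, (F.δh μ (F.Lhb g α ν) p * F.Gm g β p
            + F.Lhb g α ν p * F.δh μ (F.Gm g β) p) := by
      rw [δh_sum (fun g _ => ((Sm_Lhb F g α ν).mul (Sm_Gm F g β)).diffAt hp) μ]
      exact Finset.sum_congr rfl fun g _ =>
        δh_mul ((Sm_Lhb F g α ν).diffAt hp) ((Sm_Gm F g β).diffAt hp) μ
    have hcgr : F.δh μ (fun q => ∑ g, F.Lhb g α ν q * F.Gm g β q) p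
        = F.δh μ (fun q => (1/2 : ℂ)
            * (F.δhb ν (F.Gm α β) q - F.δhb β (F.Gm α ν) q)) p :=
      δh_congr hp (fun q hq => Lhb_lowered F hq α ν β) μ
    rw [← hcgr, hprod, Finset.sum_add_distrib]
    ring
  have hdt' : ∀ μ α ν β : Fin n,
      F.δh μ (fun q => (1/2 : ℂ)
          * (F.δhb ν (F.Gm α β) q - F.δhb β (F.Gm α ν) q)) p
        = -F.δh μ (fun q => (1/2 : ℂ)
          * (F.δhb β (F.Gm α ν) q - F.δhb ν (F.Gm α β) q)) p := by
    intro μ α ν β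
    rw [show (fun q => (1/2 : ℂ) * (F.δhb ν (F.Gm α β) q - F.δhb β (F.Gm α ν) q))
        = (fun q => -((1/2 : ℂ) * (F.δhb β (F.Gm α ν) q - F.δhb ν (F.Gm α β) q)))
      from funext fun q => by ring]
    rw [δh_neg]
  have hD2' : ∀ g α μ ν : Fin n,
      F.δhb ν (F.Sh g α μ) p = -F.δhb ν (F.Sh g μ α) p := by
    intro g α μ ν
    rw [show F.Sh g α μ = (fun q => -F.Sh g μ α q)
      from funext fun q => by rw [SPCF.Sh, SPCF.Sh]; ring]
    rw [δhb_neg]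
  exact core (fun k σ => F.Ginv k σ p) (fun g β => F.Gm g β p)
    (fun g σ ν => F.Lhb g σ ν p) (fun g σ μ => F.Lh g σ μ p)
    (fun μ g β => F.δh μ (F.Gm g β) p) (fun σ μ β => F.Shl σ μ β p)
    (fun σ ν β => (1/2 : ℂ) * (F.δhb ν (F.Gm σ β) p - F.δhb β (F.Gm σ ν) p))
    (fun σ μ β => (1/2 : ℂ) * (F.δh μ (F.Gm σ β) p + F.δh σ (F.Gm μ β) p))
    (fun g α μ ν => F.δh μ (F.Lhb g α ν) p)
    (fun g α μ ν => F.δhb ν (F.Sh g α μ) p)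
    (fun μ α ν β => F.δh μ (fun q => (1/2 : ℂ)
      * (F.δhb ν (F.Gm α β) q - F.δhb β (F.Gm α ν) q)) p)
    H (fun σ ν β => Lhb_lowered F hp σ ν β) ht'
    (fun σ μ β => Lh_lowered F hp σ μ β) hl' hf3' hdt' hD2' (hU_lemma F hp H)

/-! ### Polarization -/

lemma polarize {B : Fin n → Fin n → ℂ}
    (h : ∀ H : Fin n → ℂ, ∑ μ, ∑ β, B μ β * H μ * conj (H β) = 0) :
    ∀ μ β, B μ β = 0 := by
  classical
  have key : ∀ (i j : Fin n) (c : ℂ),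
      B i i + conj c * B i j + c * B j i + c * conj c * B j j = 0 := by
    intro i j c
    have hh := h (fun x => (if x = i then (1:ℂ) else 0) + c * (if x = j then 1 else 0))
    simp only [map_add, map_mul, map_one, map_zero, apply_ite (starRingEnd ℂ),
      mul_add, add_mul, mul_ite, ite_mul, mul_one, one_mul, mul_zero, zero_mul,
      Finset.sum_add_distrib, Finset.sum_ite_eq', Finset.mem_univ, if_true] at hh
    linear_combination hh
  have hdiag : ∀ i, B i i = 0 := by
    intro i
    have := key i i 0
    simpa using this
  intro i j
  have h1 := key i j 1
  have h2 := key i j Complex.I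
  rw [hdiag i, hdiag j] at h1 h2
  simp only [map_one, Complex.conj_I, one_mul, mul_one] at h1 h2
  linear_combination (1/2 : ℂ) * h1 + (Complex.I/2) * h2
    + ((B i j - B j i)/2) * Complex.I_sq

/-! ### Numerators from flag curvature equality -/

lemma flag_eq_numerator {p : Pt n} (hp : p ∈ slit n) {H : Fin n → ℂ}
    (hH : H ≠ 0) (h : F.flagR H p = F.flagD H p) :
    (∑ α, ∑ β, ∑ μ, ∑ ν,
        F.Rc α β μ ν p * H α * conj (H β) * H μ * conj (H ν))
      = ∑ α, ∑ β, ∑ μ, ∑ ν,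
        F.Om α β μ ν p * H α * conj (H β) * H μ * conj (H ν) := by
  have hD := quad_ne_zero F hp hH
  rw [SPCF.flagR, SPCF.flagD] at h
  rw [div_eq_div_iff (pow_ne_zero 2 hD) (pow_ne_zero 2 hD)] at h
  exact mul_right_cancel₀ (pow_ne_zero 2 hD) h

/-! ### The three implications -/

lemma one_to_two
    (h : ∀ (α β μ ν : Fin n), ∀ p ∈ slit n, F.Rc α β μ ν p = F.Om α β μ ν p) :
    ∀ p ∈ slit n, ∀ H : Fin n → ℂ, H ≠ 0 → F.flagR H p = F.flagD H p := by
  intro p hp H _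
  rw [SPCF.flagR, SPCF.flagD]
  congr 1
  exact Finset.sum_congr rfl fun α _ => Finset.sum_congr rfl fun β _ =>
    Finset.sum_congr rfl fun μ _ => Finset.sum_congr rfl fun ν _ => by
      rw [h α β μ ν p hp]

lemma two_to_three
    (h2 : ∀ p ∈ slit n, ∀ H : Fin n → ℂ, H ≠ 0 → F.flagR H p = F.flagD H p) :
    F.IsKaehler := by
  intro α β μ p hp
  have hShl : ∀ σ a b : Fin n, F.Shl σ a b p = 0 := by
    have hW : ∀ (H : Fin n → ℂ) (σ : Fin n),
        (∑ a, ∑ b, F.Shl σ a b p * H a * conj (H b)) = 0 := by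
      intro H σ
      by_cases hH : H = 0
      · subst hH; simp
      · have hnum := flag_eq_numerator F hp hH (h2 p hp H hH)
        have hcon := contraction F hp H
        rw [hnum, sub_self] at hcon
        have h0 : (∑ σ', ∑ k, F.Ginv k σ' p
            * (∑ a, ∑ b, F.Shl σ' a b p * H a * conj (H b))
            * conj (∑ a, ∑ b, F.Shl k a b p * H a * conj (H b))) = 0 := by
          have h' := hcon.symm
          rwa [neg_eq_zero] at h'
        have hz := inv_quad_zero F hp
          (W := fun σ' => ∑ a, ∑ b, F.Shl σ' a b p * H a * conj (H b)) h0
        exact congrFun hz σ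
    intro σ
    exact polarize (B := fun a b => F.Shl σ a b p) (fun H => hW H σ)
  have hsub : F.Γh α β μ p - F.Γh α μ β p = 0 := by
    rw [SPCF.Γh, SPCF.Γh, ← Finset.sum_sub_distrib]
    have hterm : ∀ l, F.Ginv l α p * F.δh μ (F.Gm β l) p
        - F.Ginv l α p * F.δh β (F.Gm μ l) p
        = F.Ginv l α p * (2 * F.Shl β μ l p) := by
      intro l; rw [SPCF.Shl]; ring
    calc ∑ l, (F.Ginv l α p * F.δh μ (F.Gm β l) p
          - F.Ginv l α p * F.δh β (F.Gm μ l) p)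
        = ∑ l, F.Ginv l α p * (2 * F.Shl β μ l p) :=
          Finset.sum_congr rfl fun l _ => hterm l
      _ = 0 := by
          refine Finset.sum_eq_zero fun l _ => ?_
          rw [hShl β μ l]; ring
  exact sub_eq_zero.mp hsub

lemma three_to_one (hK : F.IsKaehler) :
    ∀ (α β μ ν : Fin n), ∀ p ∈ slit n, F.Rc α β μ ν p = F.Om α β μ ν p := by
  intro α β μ ν p hp
  have hShl0 : ∀ q ∈ slit n, ∀ a g l : Fin n, F.Shl a g l q = 0 := by
    intro q hq a g l
    rw [SPCF.Shl, δh_Gm F hq a l g, δh_Gm F hq g l a, ← Finset.sum_sub_distrib]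
    have : ∀ x, F.Γh x a g q * F.Gm x l q - F.Γh x g a q * F.Gm x l q = 0 := by
      intro x; rw [hK x a g q hq]; ring
    rw [Finset.sum_eq_zero fun x _ => this x]
    ring
  have hLhb0 : ∀ q ∈ slit n, ∀ g a m : Fin n, F.Lhb g a m q = 0 := by
    intro q hq g a m
    rw [SPCF.Lhb]
    have hk : ∀ k, F.Ginv k g q * (F.δhb m (F.Gm a k) q - F.δhb k (F.Gm a m) q)
        = F.Ginv k g q * (2 * conj (F.Shl k m a q)) := by
      intro k
      congr 1
      rw [conj_Shl F hq k m a]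
      ring
    rw [Finset.sum_congr rfl fun k _ => hk k]
    rw [Finset.sum_eq_zero fun k _ => by rw [hShl0 q hq k m a, map_zero]; ring]
    ring
  have hSh0 : ∀ q ∈ slit n, ∀ g a m : Fin n, F.Sh g a m q = 0 := by
    intro q hq g a m
    rw [SPCF.Sh, hK g a m q hq]
    ring
  have hdec := Rc_sub_Om F hp α β μ ν
  have hz : (∑ g, (F.δh μ (F.Lhb g α ν) p + F.δhb ν (F.Sh g α μ) p
      + ∑ σ, (F.Lhb σ α ν p * F.Lh g σ μ p - F.Lh σ α μ p * F.Lhb g σ ν p))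
      * F.Gm g β p) = 0 := by
    refine Finset.sum_eq_zero fun g _ => ?_
    have h1 : F.δh μ (F.Lhb g α ν) p = 0 :=
      δh_eqZero hp (fun q hq => hLhb0 q hq g α ν) μ
    have h2 : F.δhb ν (F.Sh g α μ) p = 0 :=
      δhb_eqZero hp (fun q hq => hSh0 q hq g α μ) ν
    have h3 : (∑ σ, (F.Lhb σ α ν p * F.Lh g σ μ p
        - F.Lh σ α μ p * F.Lhb g σ ν p)) = 0 :=
      Finset.sum_eq_zero fun σ _ => by
        rw [hLhb0 p hp σ α ν, hLhb0 p hp g σ ν]; ring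
    rw [h1, h2, h3]
    ring
  rw [hz] at hdec
  exact sub_eq_zero.mp hdec

end CFGAux

/-- Theorem 1.1(1).  For a strongly pseudoconvex complex
Finsler manifold `(M, F)`, the following are equivalent:
(i) `R_{αβ̄μν̄} = Ω_{αβ̄;μν̄}` for all indices;
(ii) `K_∇(H) = K_D(H)` for every nonzero horizontal vector `H`;
(iii) `F` is a Kähler-Finsler metric. -/
theorem statement0 {n : ℕ} (hn : 2 ≤ n) (F : SPCF n) :
    List.TFAE
      [∀ (α β μ ν : Fin n), ∀ p ∈ slit n, F.Rc α β μ ν p = F.Om α β μ ν p,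
       ∀ p ∈ slit n, ∀ H : Fin n → ℂ, H ≠ 0 → F.flagR H p = F.flagD H p,
       F.IsKaehler] := by
  tfae_have 1 → 2 := fun h => CFGAux.one_to_two F h
  tfae_have 2 → 3 := fun h => CFGAux.two_to_three F h
  tfae_have 3 → 1 := fun h => CFGAux.three_to_one F h
  tfae_finish
end
end

section
/- Let (M, F) be a strongly pseudoconvex complex Finsler manifold. Then the holomorphic sectional curvature tensor of the canonical connection satisfies, in local coordinates: R_{αβ̄μν̄} = −½[δ_ν̄δ_α(G_{μβ̄}) + δ_β̄δ_μ(G_{αν̄}) + δ_ν̄(Γ^σ_{;μ})G_{αβ̄σ} + δ_β̄(Γ^σ_{;μ})G_{αν̄σ}] + ¼[δ_μ(G_{αλ̄}) + δ_α(G_{μλ̄})]G^{λ̄γ}[δ_ν̄(G_{γβ̄}) + δ_β̄(G_{γν̄})] − ¼[δ_ν̄(G_{αλ̄}) − δ_λ̄(G_{αν̄})]G^{λ̄γ}[δ_μ(G_{γβ̄}) − δ_γ(G_{μβ̄})] + ½[δ_μ(Γ^τ̄_{;β̄})G_{αν̄τ̄} − δ_μ(Γ^τ̄_{;ν̄})G_{αβ̄τ̄}].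 -/
/-!
A local-coordinate formalization of strongly pseudoconvex complex Finsler metrics,
following Abate–Patrizio and Munteanu.  A point of the (slit) holomorphic tangent
bundle `M̃ = T^{1,0}M ∖ {0}` is represented in a holomorphic coordinate chart by a
pair `(z, v) ∈ ℂⁿ × ℂⁿ`.  All derivatives are genuine Wirtinger derivatives
(expressed through `fderiv ℝ`), and all the tensors of the Chern–Finsler
connection `D`, the canonical connection `∇` of Munteanu and its extension `∇ᶜ`
are defined by their standard local-coordinate expressions.  Horizontal
`(p,q)`-forms on the projective tangent bundle `PM̃` are represented by their
(alternating, `0`-homogeneous) coefficient arrays, in the convention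
`φ = (1/(p! q!)) φ_{I J̄} dz^I ∧ dz̄^J`.
The invariant integral `∫_{PM̃} · dμ_{PM̃}` (which exists when the base manifold
`M` is compact) is encoded by the structure `PTMIntegral`; a hypothesis
`(vol : PTMIntegral F)` plays the role of the compactness of `M`.
-/

open ComplexConjugate BigOperators

noncomputable section

namespace CFG

variable {n : ℕ}

/-! ### Auxiliary calculus toolkit -/

section Toolkit

variable {n : ℕ}

lemma isOpen_slit : IsOpen (slit n) := by
  have : slit n = Prod.snd ⁻¹' ({0}ᶜ) := rfl
  rw [this]; exact (isClosed_singleton.preimage continuous_snd).isOpen_compl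

/-- Smooth on the slit bundle. -/
abbrev SmOn (f : Pt n → ℂ) : Prop := ContDiffOn ℝ (⊤ : ℕ∞) f (slit n)

lemma SmOn.dAt {f : Pt n → ℂ} (hf : SmOn f) {p : Pt n} (hp : p ∈ slit n) :
    DifferentiableAt ℝ f p :=
  (hf.differentiableOn (by simp)).differentiableAt (isOpen_slit.mem_nhds hp)

lemma SmOn.add' {f g : Pt n → ℂ} (hf : SmOn f) (hg : SmOn g) : SmOn (fun p => f p + g p) :=
  hf.add hg

lemma SmOn.sub' {f g : Pt n → ℂ} (hf : SmOn f) (hg : SmOn g) : SmOn (fun p => f p - g p) :=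
  hf.sub hg

lemma SmOn.mul' {f g : Pt n → ℂ} (hf : SmOn f) (hg : SmOn g) : SmOn (fun p => f p * g p) :=
  hf.mul hg

lemma SmOn.cmul {f : Pt n → ℂ} (hf : SmOn f) (c : ℂ) : SmOn (fun p => c * f p) :=
  contDiffOn_const.mul hf

lemma SmOn.conj' {f : Pt n → ℂ} (hf : SmOn f) : SmOn (fun p => conj (f p)) :=
  (Complex.conjCLE : ℂ →L[ℝ] ℂ).contDiff.comp_contDiffOn hf

lemma SmOn_sum {ι : Type*} (s : Finset ι) {f : ι → Pt n → ℂ}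
    (h : ∀ i ∈ s, SmOn (f i)) : SmOn (fun p => ∑ i ∈ s, f i p) :=
  ContDiffOn.sum h

lemma SmOn_prod {ι : Type*} (s : Finset ι) {f : ι → Pt n → ℂ}
    (h : ∀ i ∈ s, SmOn (f i)) : SmOn (fun p => ∏ i ∈ s, f i p) := by
  classical
  induction s using Finset.induction_on with
  | empty => simpa using contDiffOn_const
  | insert a t hx ih =>
    simp only [Finset.prod_insert hx]
    exact (h a (Finset.mem_insert_self a t)).mul'
      (ih fun i hi => h i (Finset.mem_insert_of_mem hi))

lemma SmOn_const (c : ℂ) : SmOn (fun _ : Pt n => c) := contDiffOn_const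

/-- The directional derivative operator. -/
def Dw (w : Pt n) (f : Pt n → ℂ) : Pt n → ℂ := fun p => fderiv ℝ f p w

lemma Dw_add {f g : Pt n → ℂ} {p : Pt n} (hf : DifferentiableAt ℝ f p)
    (hg : DifferentiableAt ℝ g p) (w : Pt n) :
    Dw w (fun y => f y + g y) p = Dw w f p + Dw w g p := by
  simp [Dw, fderiv_fun_add hf hg]

lemma Dw_sub {f g : Pt n → ℂ} {p : Pt n} (hf : DifferentiableAt ℝ f p)
    (hg : DifferentiableAt ℝ g p) (w : Pt n) :
    Dw w (fun y => f y - g y) p = Dw w f p - Dw w g p := by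
  simp [Dw, fderiv_fun_sub hf hg]

lemma Dw_const_mul {f : Pt n → ℂ} {p : Pt n} (hf : DifferentiableAt ℝ f p) (c : ℂ) (w : Pt n) :
    Dw w (fun y => c * f y) p = c * Dw w f p := by
  simp [Dw, fderiv_const_mul hf c]

lemma Dw_mul {f g : Pt n → ℂ} {p : Pt n} (hf : DifferentiableAt ℝ f p)
    (hg : DifferentiableAt ℝ g p) (w : Pt n) :
    Dw w (fun y => f y * g y) p = Dw w f p * g p + f p * Dw w g p := by
  simp [Dw, fderiv_fun_mul hf hg]; ring

lemma Dw_sum {ι : Type*} (s : Finset ι) {f : ι → Pt n → ℂ} {p : Pt n}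
    (hf : ∀ i ∈ s, DifferentiableAt ℝ (f i) p) (w : Pt n) :
    Dw w (fun y => ∑ i ∈ s, f i y) p = ∑ i ∈ s, Dw w (f i) p := by
  simp [Dw, fderiv_fun_sum hf]

lemma Dw_congr_nhds {f g : Pt n → ℂ} {p : Pt n} (h : f =ᶠ[nhds p] g) (w : Pt n) :
    Dw w f p = Dw w g p := by simp [Dw, h.fderiv_eq]

lemma Dw_const (c : ℂ) (w : Pt n) (p : Pt n) : Dw w (fun _ => c) p = 0 := by simp [Dw]

lemma SmOn.Dw_smooth {f : Pt n → ℂ} (hf : SmOn f) (w : Pt n) : SmOn (Dw w f) := by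
  have h1 : ContDiffOn ℝ (⊤ : ℕ∞) (fderiv ℝ f) (slit n) := hf.fderiv_of_isOpen isOpen_slit (by simp)
  have : Dw w f = fun p => (ContinuousLinearMap.apply ℝ ℂ w) (fderiv ℝ f p) := rfl
  rw [this]
  exact (ContinuousLinearMap.apply ℝ ℂ w).contDiff.comp_contDiffOn h1

lemma Dw_comm {f : Pt n → ℂ} (hf : SmOn f) {p : Pt n} (hp : p ∈ slit n) (w w' : Pt n) :
    Dw w (Dw w' f) p = Dw w' (Dw w f) p := by
  have hsym : IsSymmSndFDerivAt ℝ f p :=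
    ContDiffAt.isSymmSndFDerivAt (hf.contDiffAt (isOpen_slit.mem_nhds hp)) (by rw [minSmoothness_of_isRCLikeNormedField]; exact WithTop.coe_le_coe.2 (le_top : (2:ℕ∞) ≤ ⊤))
  have hd : DifferentiableAt ℝ (fderiv ℝ f) p :=
    ((hf.fderiv_of_isOpen (m := 1) isOpen_slit (by exact WithTop.coe_le_coe.2 le_top)).differentiableOn one_ne_zero).differentiableAt
      (isOpen_slit.mem_nhds hp)
  have key : ∀ u v : Pt n, Dw u (Dw v f) p = fderiv ℝ (fderiv ℝ f) p u v := by
    intro u v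
    have : Dw v f = fun q => (ContinuousLinearMap.apply ℝ ℂ v) (fderiv ℝ f q) := rfl
    rw [Dw, this]
    rw [show (fun q => (ContinuousLinearMap.apply ℝ ℂ v) (fderiv ℝ f q)) =
        (ContinuousLinearMap.apply ℝ ℂ v) ∘ (fderiv ℝ f) from rfl,
      fderiv_comp p (ContinuousLinearMap.apply ℝ ℂ v).differentiableAt hd]
    simp
  rw [key, key, hsym w w']

/-- A generic Wirtinger-type first order operator. -/
def wd (u v : Pt n) (s : ℂ) (f : Pt n → ℂ) : Pt n → ℂ :=
  fun p => (1 / 2 : ℂ) * (Dw u f p + s * Dw v f p)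

lemma wd_add {f g : Pt n → ℂ} {p : Pt n} (hf : DifferentiableAt ℝ f p)
    (hg : DifferentiableAt ℝ g p) (u v : Pt n) (s : ℂ) :
    wd u v s (fun y => f y + g y) p = wd u v s f p + wd u v s g p := by
  simp only [wd, Dw_add hf hg]; ring

lemma wd_sub {f g : Pt n → ℂ} {p : Pt n} (hf : DifferentiableAt ℝ f p)
    (hg : DifferentiableAt ℝ g p) (u v : Pt n) (s : ℂ) :
    wd u v s (fun y => f y - g y) p = wd u v s f p - wd u v s g p := by
  simp only [wd, Dw_sub hf hg]; ring

lemma wd_const_mul {f : Pt n → ℂ} {p : Pt n} (hf : DifferentiableAt ℝ f p) (c : ℂ)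
    (u v : Pt n) (s : ℂ) :
    wd u v s (fun y => c * f y) p = c * wd u v s f p := by
  simp only [wd, Dw_const_mul hf]; ring

lemma wd_mul {f g : Pt n → ℂ} {p : Pt n} (hf : DifferentiableAt ℝ f p)
    (hg : DifferentiableAt ℝ g p) (u v : Pt n) (s : ℂ) :
    wd u v s (fun y => f y * g y) p = wd u v s f p * g p + f p * wd u v s g p := by
  simp only [wd, Dw_mul hf hg]; ring

lemma wd_sum {ι : Type*} (t : Finset ι) {f : ι → Pt n → ℂ} {p : Pt n}
    (hf : ∀ i ∈ t, DifferentiableAt ℝ (f i) p) (u v : Pt n) (s : ℂ) :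
    wd u v s (fun y => ∑ i ∈ t, f i y) p = ∑ i ∈ t, wd u v s (f i) p := by
  simp only [wd, Dw_sum t hf, Finset.mul_sum]
  rw [← Finset.sum_add_distrib, Finset.mul_sum]

lemma wd_congr {f g : Pt n → ℂ} {p : Pt n} (h : f =ᶠ[nhds p] g) (u v : Pt n) (s : ℂ) :
    wd u v s f p = wd u v s g p := by
  simp only [wd, Dw_congr_nhds h]

lemma wd_const (c : ℂ) (u v : Pt n) (s : ℂ) (p : Pt n) : wd u v s (fun _ => c) p = 0 := by
  simp [wd, Dw_const]

lemma SmOn.wd_smooth {f : Pt n → ℂ} (hf : SmOn f) (u v : Pt n) (s : ℂ) : SmOn (wd u v s f) := by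
  have := (hf.Dw_smooth u).add ((hf.Dw_smooth v).const_smul s)
  have h2 := this.const_smul (1/2 : ℂ)
  exact h2.congr (fun p _ => by simp [wd, smul_eq_mul])

lemma wd_wd {f : Pt n → ℂ} (hf : SmOn f) {p : Pt n} (hp : p ∈ slit n)
    (u v u' v' : Pt n) (s s' : ℂ) :
    wd u v s (wd u' v' s' f) p = wd u' v' s' (wd u v s f) p := by
  have d1 : ∀ w : Pt n, DifferentiableAt ℝ (Dw w f) p := fun w => (hf.Dw_smooth w).dAt hp
  have e : ∀ w w₁ w₂ : Pt n, ∀ c : ℂ, Dw w (wd w₁ w₂ c f) p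
      = (1/2 : ℂ) * (Dw w (Dw w₁ f) p + c * Dw w (Dw w₂ f) p) := by
    intro w w₁ w₂ c
    have : wd w₁ w₂ c f = fun y => (1/2 : ℂ) * (Dw w₁ f y + c * Dw w₂ f y) := rfl
    rw [this, Dw_const_mul (f := fun y => Dw w₁ f y + c * Dw w₂ f y) ((d1 w₁).add ((d1 w₂).const_mul c)) _ w,
      Dw_add (d1 w₁) ((d1 w₂).const_mul c) w, Dw_const_mul (d1 w₂) c w]
  simp only [wd, e]
  rw [Dw_comm hf hp u u', Dw_comm hf hp u v', Dw_comm hf hp v u', Dw_comm hf hp v v']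
  ring

/-! ### Bridges to the Wirtinger derivatives -/

/-- Coordinate direction vectors. -/
def zc1 (μ : Fin n) : Pt n := (Pi.single μ 1, 0)
def zcI (μ : Fin n) : Pt n := (Pi.single μ Complex.I, 0)
def vc1 (μ : Fin n) : Pt n := (0, Pi.single μ 1)
def vcI (μ : Fin n) : Pt n := (0, Pi.single μ Complex.I)

lemma dz_eq (μ : Fin n) (f : Pt n → ℂ) : dz μ f = wd (zc1 μ) (zcI μ) (-Complex.I) f := by
  funext p; simp only [dz, wd, Dw, zc1, zcI]; ring

lemma dzb_eq (μ : Fin n) (f : Pt n → ℂ) : dzb μ f = wd (zc1 μ) (zcI μ) Complex.I f := by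
  funext p; simp only [dzb, wd, Dw, zc1, zcI]

lemma dv_eq (μ : Fin n) (f : Pt n → ℂ) : dv μ f = wd (vc1 μ) (vcI μ) (-Complex.I) f := by
  funext p; simp only [dv, wd, Dw, vc1, vcI]; ring

lemma dvb_eq (μ : Fin n) (f : Pt n → ℂ) : dvb μ f = wd (vc1 μ) (vcI μ) Complex.I f := by
  funext p; simp only [dvb, wd, Dw, vc1, vcI]

end Toolkit

/-! ### The horizontal-derivative operator, smoothness, inverse identities -/

section Toolkit2

variable {n : ℕ}

/-- Generic first-order horizontal operator `wd - ∑ c σ • (fibre wd)`. -/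
def dop (u v : Pt n) (s1 : ℂ) (c : Fin n → Pt n → ℂ) (s2 : ℂ) (f : Pt n → ℂ) : Pt n → ℂ :=
  fun p => wd u v s1 f p - ∑ σ, c σ p * wd (vc1 σ) (vcI σ) s2 f p

lemma δh_eq (F : SPCF n) (μ : Fin n) (f : Pt n → ℂ) :
    F.δh μ f = dop (zc1 μ) (zcI μ) (-Complex.I) (fun σ => F.Γ0 σ μ) (-Complex.I) f := by
  funext p; simp only [SPCF.δh, dop, ← dz_eq, ← dv_eq]

lemma δhb_eq (F : SPCF n) (ν : Fin n) (f : Pt n → ℂ) :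
    F.δhb ν f = dop (zc1 ν) (zcI ν) Complex.I (fun τ y => conj (F.Γ0 τ ν y)) Complex.I f := by
  funext p; simp only [SPCF.δhb, dop, ← dzb_eq, ← dvb_eq]

variable (u v : Pt n) (s1 : ℂ) (c : Fin n → Pt n → ℂ) (s2 : ℂ)

lemma dop_add {f g : Pt n → ℂ} {p : Pt n} (hf : DifferentiableAt ℝ f p)
    (hg : DifferentiableAt ℝ g p) :
    dop u v s1 c s2 (fun y => f y + g y) p = dop u v s1 c s2 f p + dop u v s1 c s2 g p := by
  simp only [dop, wd_add hf hg, mul_add, Finset.sum_add_distrib]; ring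

lemma dop_sub {f g : Pt n → ℂ} {p : Pt n} (hf : DifferentiableAt ℝ f p)
    (hg : DifferentiableAt ℝ g p) :
    dop u v s1 c s2 (fun y => f y - g y) p = dop u v s1 c s2 f p - dop u v s1 c s2 g p := by
  simp only [dop, wd_sub hf hg, mul_sub, Finset.sum_sub_distrib]; ring

lemma dop_cmul {f : Pt n → ℂ} {p : Pt n} (hf : DifferentiableAt ℝ f p) (k : ℂ) :
    dop u v s1 c s2 (fun y => k * f y) p = k * dop u v s1 c s2 f p := by
  simp only [dop, wd_const_mul hf, mul_sub, Finset.mul_sum]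
  congr 1
  apply Finset.sum_congr rfl; intro σ _; ring

lemma dop_mul {f g : Pt n → ℂ} {p : Pt n} (hf : DifferentiableAt ℝ f p)
    (hg : DifferentiableAt ℝ g p) :
    dop u v s1 c s2 (fun y => f y * g y) p
      = dop u v s1 c s2 f p * g p + f p * dop u v s1 c s2 g p := by
  have h1 : ∑ σ, c σ p * wd (vc1 σ) (vcI σ) s2 (fun y => f y * g y) p
      = (∑ σ, c σ p * wd (vc1 σ) (vcI σ) s2 f p) * g p
        + f p * ∑ σ, c σ p * wd (vc1 σ) (vcI σ) s2 g p := by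
    rw [Finset.sum_mul, Finset.mul_sum, ← Finset.sum_add_distrib]
    apply Finset.sum_congr rfl; intro σ _
    rw [wd_mul hf hg]; ring
  simp only [dop]; rw [h1, wd_mul hf hg]; ring

lemma dop_sum {ι : Type*} (t : Finset ι) {f : ι → Pt n → ℂ} {p : Pt n}
    (hf : ∀ i ∈ t, DifferentiableAt ℝ (f i) p) :
    dop u v s1 c s2 (fun y => ∑ i ∈ t, f i y) p = ∑ i ∈ t, dop u v s1 c s2 (f i) p := by
  simp only [dop, wd_sum t hf, Finset.mul_sum, Finset.sum_sub_distrib]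
  congr 1
  rw [Finset.sum_comm]

lemma dop_congr {f g : Pt n → ℂ} {p : Pt n} (h : f =ᶠ[nhds p] g) :
    dop u v s1 c s2 f p = dop u v s1 c s2 g p := by
  simp only [dop, wd_congr h]

lemma dop_const (k : ℂ) (p : Pt n) : dop u v s1 c s2 (fun _ => k) p = 0 := by
  simp [dop, wd_const]

lemma dop_smooth (hc : ∀ σ, SmOn (c σ)) {f : Pt n → ℂ} (hf : SmOn f) :
    SmOn (dop u v s1 c s2 f) :=
  (hf.wd_smooth u v s1).sub'
    (SmOn_sum Finset.univ fun σ _ => (hc σ).mul' (hf.wd_smooth (vc1 σ) (vcI σ) s2))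

end Toolkit2

/-! ### Smoothness of the metric data -/

section Smooth

variable {n : ℕ} (F : SPCF n)

lemma SmOn_Gc : SmOn F.Gc :=
  (Complex.ofRealCLM : ℝ →L[ℝ] ℂ).contDiff.comp_contDiffOn F.smoothG

lemma SmOn_Gm (α β : Fin n) : SmOn (F.Gm α β) := by
  have : F.Gm α β = dv α (dvb β F.Gc) := rfl
  rw [this, dv_eq, dvb_eq]
  exact ((SmOn_Gc F).wd_smooth _ _ _).wd_smooth _ _ _

lemma Levi_apply (p : Pt n) (a b : Fin n) : F.Levi p a b = F.Gm a b p := rfl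

lemma SmOn_detLevi : SmOn (fun p => (F.Levi p).det) := by
  have : (fun p => (F.Levi p).det)
      = fun p => ∑ σ : Equiv.Perm (Fin n),
          ((Equiv.Perm.sign σ : ℤ) : ℂ) * ∏ i, F.Gm (σ i) i p := by
    funext p; rw [Matrix.det_apply']; rfl
  rw [this]
  exact SmOn_sum Finset.univ fun σ _ =>
    (SmOn_prod Finset.univ fun i _ => SmOn_Gm F (σ i) i).cmul _

lemma detLevi_ne {p : Pt n} (hp : p ∈ slit n) : (F.Levi p).det ≠ 0 := by
  intro h0
  obtain ⟨w, hw, hmv⟩ := Matrix.exists_mulVec_eq_zero_iff.2 h0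
  have hpos := (F.posdef p hp (fun β => conj (w β)) (by
    intro hco
    apply hw
    funext β
    have := congrFun hco β
    simpa using congrArg conj this)).1
  have : (∑ α, ∑ β, levi F.G α β p * conj (w α) * conj (conj (w β))) = 0 := by
    have : ∀ α, ∑ β, levi F.G α β p * conj (w α) * conj (conj (w β))
        = conj (w α) * (F.Levi p).mulVec w α := by
      intro α
      simp only [Matrix.mulVec, dotProduct, Finset.mul_sum]
      apply Finset.sum_congr rfl; intro β _
      simp only [Complex.conj_conj]
      have h3 : F.Levi p α β = levi F.G α β p := rfl
      rw [h3]; ring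
    rw [Finset.sum_congr rfl fun α _ => this α]
    simp [hmv]
  rw [this] at hpos
  simp at hpos

lemma Ginv_eq (l α : Fin n) :
    F.Ginv l α = fun p => ((F.Levi p).det)⁻¹ * (F.Levi p).adjugate l α := by
  funext p
  have : F.Ginv l α p = (F.Levi p)⁻¹ l α := rfl
  rw [this, Matrix.inv_def, Ring.inverse_eq_inv']
  simp [Matrix.smul_apply, smul_eq_mul]

lemma SmOn_Ginv (l α : Fin n) : SmOn (F.Ginv l α) := by
  rw [Ginv_eq]
  apply SmOn.mul'
  · exact (SmOn_detLevi F).inv (fun p hp => detLevi_ne F hp)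
  · have : (fun p => (F.Levi p).adjugate l α)
        = fun p => ((F.Levi p).updateRow α (Pi.single l 1)).det := by
      funext p; rw [Matrix.adjugate_apply]
    rw [this]
    have : (fun p => ((F.Levi p).updateRow α (Pi.single l 1)).det)
        = fun p => ∑ σ : Equiv.Perm (Fin n),
            ((Equiv.Perm.sign σ : ℤ) : ℂ) *
              ∏ i, (if σ i = α then Pi.single l (1:ℂ) i else F.Gm (σ i) i p) := by
      funext p
      rw [Matrix.det_apply']
      apply Finset.sum_congr rfl; intro σ _
      congr 1
      apply Finset.prod_congr rfl; intro i _
      by_cases h : σ i = α <;> simp [Matrix.updateRow_apply, h, Levi_apply]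
    rw [this]
    apply SmOn_sum Finset.univ
    intro σ _
    apply SmOn.cmul
    apply SmOn_prod Finset.univ
    intro i _
    by_cases h : σ i = α <;> simp [h]
    · exact SmOn_const _
    · exact SmOn_Gm F (σ i) i

lemma Ginv_Gm {p : Pt n} (hp : p ∈ slit n) (l β : Fin n) :
    ∑ g, F.Ginv l g p * F.Gm g β p = if l = β then 1 else 0 := by
  have hdet : IsUnit (F.Levi p).det := Ne.isUnit (detLevi_ne F hp)
  have h1 : (F.Levi p)⁻¹ * F.Levi p = 1 := Matrix.nonsing_inv_mul _ hdet
  have := congrFun (congrFun h1 l) β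
  rw [Matrix.mul_apply, Matrix.one_apply] at this
  have h2 : ∑ g, F.Ginv l g p * F.Gm g β p = ∑ j, (F.Levi p)⁻¹ l j * F.Levi p j β := rfl
  rw [h2, this]

lemma SmOn_Γ0 (σ μ : Fin n) : SmOn (F.Γ0 σ μ) := by
  have : F.Γ0 σ μ = fun p => ∑ l, F.Ginv l σ p * (dz μ (dvb l F.Gc)) p := rfl
  rw [this]
  apply SmOn_sum Finset.univ
  intro l _
  apply (SmOn_Ginv F l σ).mul'
  rw [dz_eq, dvb_eq]
  exact ((SmOn_Gc F).wd_smooth _ _ _).wd_smooth _ _ _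

lemma SmOn_cΓ0 (τ ν : Fin n) : SmOn (fun y => conj (F.Γ0 τ ν y)) :=
  (SmOn_Γ0 F τ ν).conj'

lemma SmOn_δh {f : Pt n → ℂ} (hf : SmOn f) (μ : Fin n) : SmOn (F.δh μ f) := by
  rw [δh_eq]; exact dop_smooth _ _ _ _ _ (fun σ => SmOn_Γ0 F σ μ) hf

lemma SmOn_δhb {f : Pt n → ℂ} (hf : SmOn f) (ν : Fin n) : SmOn (F.δhb ν f) := by
  rw [δhb_eq]; exact dop_smooth _ _ _ _ _ (fun τ => SmOn_cΓ0 F τ ν) hf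

/-- Differentiating the identity `∑ g, G^{l̄g} G_{gβ̄} = δ_{lβ}`. -/
lemma dop_inv_rel (u v : Pt n) (s1 : ℂ) (c : Fin n → Pt n → ℂ) (s2 : ℂ)
    {p : Pt n} (hp : p ∈ slit n) (l β : Fin n) :
    ∑ g, dop u v s1 c s2 (F.Ginv l g) p * F.Gm g β p
      = - ∑ g, F.Ginv l g p * dop u v s1 c s2 (F.Gm g β) p := by
  have hev : (fun y => ∑ g, F.Ginv l g y * F.Gm g β y)
      =ᶠ[nhds p] (fun _ => if l = β then (1:ℂ) else 0) := by
    filter_upwards [isOpen_slit.mem_nhds hp] with y hy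
    exact Ginv_Gm F hy l β
  have h0 : dop u v s1 c s2 (fun y => ∑ g, F.Ginv l g y * F.Gm g β y) p = 0 := by
    rw [dop_congr _ _ _ _ _ hev, dop_const]
  rw [dop_sum _ _ _ _ _ Finset.univ (fun g _ =>
    ((SmOn_Ginv F l g).mul' (SmOn_Gm F g β)).dAt hp)] at h0
  have h1 : ∀ g : Fin n, dop u v s1 c s2 (fun y => F.Ginv l g y * F.Gm g β y) p
      = dop u v s1 c s2 (F.Ginv l g) p * F.Gm g β p
        + F.Ginv l g p * dop u v s1 c s2 (F.Gm g β) p := fun g =>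
    dop_mul _ _ _ _ _ ((SmOn_Ginv F l g).dAt hp) ((SmOn_Gm F g β).dAt hp)
  rw [Finset.sum_congr rfl fun g _ => h1 g, Finset.sum_add_distrib] at h0
  exact eq_neg_of_add_eq_zero_left h0

end Smooth

/-! ### Commutator of horizontal derivatives -/

section Comm

variable {n : ℕ}

lemma dop_expand (u v : Pt n) (s1 : ℂ) (c : Fin n → Pt n → ℂ) (s2 : ℂ)
    (x y : Pt n) (t1 : ℂ) (d : Fin n → Pt n → ℂ) (t2 : ℂ)
    (hd : ∀ τ, SmOn (d τ)) {f : Pt n → ℂ} (hf : SmOn f) {p : Pt n} (hp : p ∈ slit n) :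
    dop u v s1 c s2 (dop x y t1 d t2 f) p
      = dop u v s1 c s2 (wd x y t1 f) p
        - ∑ τ, dop u v s1 c s2 (d τ) p * wd (vc1 τ) (vcI τ) t2 f p
        - ∑ τ, d τ p * dop u v s1 c s2 (wd (vc1 τ) (vcI τ) t2 f) p := by
  have hsm : ∀ τ, SmOn (fun q => d τ q * wd (vc1 τ) (vcI τ) t2 f q) :=
    fun τ => (hd τ).mul' (hf.wd_smooth _ _ _)
  calc dop u v s1 c s2 (dop x y t1 d t2 f) p
      = dop u v s1 c s2 (wd x y t1 f) p
          - dop u v s1 c s2 (fun q => ∑ τ, d τ q * wd (vc1 τ) (vcI τ) t2 f q) p :=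
        dop_sub u v s1 c s2 ((hf.wd_smooth x y t1).dAt hp)
          ((SmOn_sum Finset.univ (fun τ _ => hsm τ)).dAt hp)
    _ = dop u v s1 c s2 (wd x y t1 f) p
          - ∑ τ, dop u v s1 c s2 (fun q => d τ q * wd (vc1 τ) (vcI τ) t2 f q) p := by
        rw [dop_sum u v s1 c s2 Finset.univ (fun τ _ => (hsm τ).dAt hp)]
    _ = dop u v s1 c s2 (wd x y t1 f) p
          - ∑ τ, (dop u v s1 c s2 (d τ) p * wd (vc1 τ) (vcI τ) t2 f p
              + d τ p * dop u v s1 c s2 (wd (vc1 τ) (vcI τ) t2 f) p) := by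
        rw [Finset.sum_congr rfl (fun τ _ =>
          dop_mul u v s1 c s2 ((hd τ).dAt hp) ((hf.wd_smooth _ _ _).dAt hp))]
    _ = _ := by rw [Finset.sum_add_distrib]; ring

lemma dop_dop_comm (u v : Pt n) (s1 : ℂ) (c : Fin n → Pt n → ℂ) (s2 : ℂ)
    (x y : Pt n) (t1 : ℂ) (d : Fin n → Pt n → ℂ) (t2 : ℂ)
    (hc : ∀ σ, SmOn (c σ)) (hd : ∀ τ, SmOn (d τ))
    {f : Pt n → ℂ} (hf : SmOn f) {p : Pt n} (hp : p ∈ slit n) :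
    dop u v s1 c s2 (dop x y t1 d t2 f) p - dop x y t1 d t2 (dop u v s1 c s2 f) p
      = ∑ σ, dop x y t1 d t2 (c σ) p * wd (vc1 σ) (vcI σ) s2 f p
        - ∑ τ, dop u v s1 c s2 (d τ) p * wd (vc1 τ) (vcI τ) t2 f p := by
  have key : dop u v s1 c s2 (wd x y t1 f) p
        - ∑ τ, d τ p * dop u v s1 c s2 (wd (vc1 τ) (vcI τ) t2 f) p
      = dop x y t1 d t2 (wd u v s1 f) p
        - ∑ σ, c σ p * dop x y t1 d t2 (wd (vc1 σ) (vcI σ) s2 f) p := by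
    simp only [dop]
    have e0 : wd u v s1 (wd x y t1 f) p = wd x y t1 (wd u v s1 f) p := wd_wd hf hp _ _ _ _ _ _
    have e1 : ∑ σ, c σ p * wd (vc1 σ) (vcI σ) s2 (wd x y t1 f) p
        = ∑ σ, c σ p * wd x y t1 (wd (vc1 σ) (vcI σ) s2 f) p :=
      Finset.sum_congr rfl (fun σ _ => by rw [wd_wd hf hp])
    have e2 : ∑ τ, d τ p * (wd u v s1 (wd (vc1 τ) (vcI τ) t2 f) p
          - ∑ σ, c σ p * wd (vc1 σ) (vcI σ) s2 (wd (vc1 τ) (vcI τ) t2 f) p)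
        = ∑ τ, d τ p * (wd (vc1 τ) (vcI τ) t2 (wd u v s1 f) p
          - ∑ σ, c σ p * wd (vc1 τ) (vcI τ) t2 (wd (vc1 σ) (vcI σ) s2 f) p) := by
      apply Finset.sum_congr rfl; intro τ _
      rw [wd_wd hf hp, Finset.sum_congr rfl (fun σ _ => by rw [wd_wd hf hp] :
        ∀ σ ∈ Finset.univ, c σ p * wd (vc1 σ) (vcI σ) s2 (wd (vc1 τ) (vcI τ) t2 f) p
          = c σ p * wd (vc1 τ) (vcI τ) t2 (wd (vc1 σ) (vcI σ) s2 f) p)]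
    rw [e0, e1, e2]
    have e4 : ∑ τ, d τ p * ∑ σ, c σ p * wd (vc1 τ) (vcI τ) t2 (wd (vc1 σ) (vcI σ) s2 f) p
        = ∑ σ, c σ p * ∑ τ, d τ p * wd (vc1 τ) (vcI τ) t2 (wd (vc1 σ) (vcI σ) s2 f) p := by
      simp only [Finset.mul_sum]
      rw [Finset.sum_comm]
      exact Finset.sum_congr rfl (fun σ _ => Finset.sum_congr rfl (fun τ _ => by ring))
    simp only [mul_sub, Finset.sum_sub_distrib]
    rw [e4]
    ring
  rw [dop_expand u v s1 c s2 x y t1 d t2 hd hf hp,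
    dop_expand x y t1 d t2 u v s1 c s2 hc hf hp]
  linear_combination key

end Comm

/-! ### Delta-level wrappers -/

section Delta

variable {n : ℕ} (F : SPCF n) {p : Pt n}

lemma δh_sub' (hp : p ∈ slit n) (μ : Fin n) {f g : Pt n → ℂ} (hf : SmOn f) (hg : SmOn g) :
    F.δh μ (fun y => f y - g y) p = F.δh μ f p - F.δh μ g p := by
  simp only [δh_eq]; exact dop_sub _ _ _ _ _ (hf.dAt hp) (hg.dAt hp)

lemma δhb_add' (hp : p ∈ slit n) (ν : Fin n) {f g : Pt n → ℂ} (hf : SmOn f) (hg : SmOn g) :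
    F.δhb ν (fun y => f y + g y) p = F.δhb ν f p + F.δhb ν g p := by
  simp only [δhb_eq]; exact dop_add _ _ _ _ _ (hf.dAt hp) (hg.dAt hp)

/-- Commutator of `δ_μ` and `δ_ν̄` on the fundamental tensor. -/
lemma δ_comm_Gm (hp : p ∈ slit n) (μ ν a b : Fin n) :
    F.δh μ (F.δhb ν (F.Gm a b)) p - F.δhb ν (F.δh μ (F.Gm a b)) p
      = ∑ σ, F.δhb ν (F.Γ0 σ μ) p * F.Gm3 a b σ p
        - ∑ τ, F.δh μ (fun y => conj (F.Γ0 τ ν y)) p * F.Gm3b a b τ p := by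
  have h := dop_dop_comm (zc1 μ) (zcI μ) (-Complex.I) (fun σ => F.Γ0 σ μ) (-Complex.I)
    (zc1 ν) (zcI ν) Complex.I (fun τ y => conj (F.Γ0 τ ν y)) Complex.I
    (fun σ => SmOn_Γ0 F σ μ) (fun τ => SmOn_cΓ0 F τ ν) (SmOn_Gm F a b) hp
  have e1 : F.Gm3 a b = fun σ => wd (vc1 σ) (vcI σ) (-Complex.I) (F.Gm a b) := by
    funext σ; rw [show F.Gm3 a b σ = dv σ (F.Gm a b) from rfl, dv_eq]
  have e2 : F.Gm3b a b = fun τ => wd (vc1 τ) (vcI τ) Complex.I (F.Gm a b) := by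
    funext τ; rw [show F.Gm3b a b τ = dvb τ (F.Gm a b) from rfl, dvb_eq]
  simp only [δh_eq, δhb_eq, e1, e2]
  exact h

/-- Contraction of a horizontal derivative of an `L`-type object with the metric. -/
lemma dop_Lcontract (u v : Pt n) (s1 : ℂ) (c : Fin n → Pt n → ℂ) (s2 : ℂ)
    (hp : p ∈ slit n) (X : Fin n → Pt n → ℂ) (hX : ∀ l, SmOn (X l)) (β : Fin n) :
    ∑ g, dop u v s1 c s2 (fun q => (1/2 : ℂ) * ∑ l, F.Ginv l g q * X l q) p * F.Gm g β p
      = (1/2 : ℂ) * dop u v s1 c s2 (X β) p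
        - (1/2 : ℂ) * ∑ l, ∑ g, X l p * (F.Ginv l g p * dop u v s1 c s2 (F.Gm g β) p) := by
  have h1 : ∀ g : Fin n, dop u v s1 c s2 (fun q => (1/2 : ℂ) * ∑ l, F.Ginv l g q * X l q) p
      = (1/2 : ℂ) * ∑ l, (dop u v s1 c s2 (F.Ginv l g) p * X l p
          + F.Ginv l g p * dop u v s1 c s2 (X l) p) := by
    intro g
    rw [dop_cmul u v s1 c s2 ((SmOn_sum Finset.univ
        (fun l _ => (SmOn_Ginv F l g).mul' (hX l))).dAt hp),
      dop_sum u v s1 c s2 Finset.univ (fun l _ => ((SmOn_Ginv F l g).mul' (hX l)).dAt hp),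
      Finset.sum_congr rfl (fun l _ =>
        dop_mul u v s1 c s2 ((SmOn_Ginv F l g).dAt hp) ((hX l).dAt hp))]
  calc ∑ g, dop u v s1 c s2 (fun q => (1/2 : ℂ) * ∑ l, F.Ginv l g q * X l q) p * F.Gm g β p
      = ∑ g, (1/2 : ℂ) * ∑ l, (dop u v s1 c s2 (F.Ginv l g) p * F.Gm g β p * X l p
          + F.Ginv l g p * F.Gm g β p * dop u v s1 c s2 (X l) p) := by
        apply Finset.sum_congr rfl; intro g _
        rw [h1 g, Finset.mul_sum, Finset.sum_mul, Finset.mul_sum]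
        apply Finset.sum_congr rfl; intro l _; ring
    _ = (1/2 : ℂ) * ∑ l, ∑ g, (dop u v s1 c s2 (F.Ginv l g) p * F.Gm g β p * X l p
          + F.Ginv l g p * F.Gm g β p * dop u v s1 c s2 (X l) p) := by
        rw [← Finset.mul_sum]
        rw [Finset.sum_comm]
    _ = (1/2 : ℂ) * (∑ l, ∑ g, dop u v s1 c s2 (F.Ginv l g) p * F.Gm g β p * X l p
          + ∑ l, ∑ g, F.Ginv l g p * F.Gm g β p * dop u v s1 c s2 (X l) p) := by
        congr 1
        rw [← Finset.sum_add_distrib]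
        apply Finset.sum_congr rfl; intro l _
        exact Finset.sum_add_distrib
    _ = (1/2 : ℂ) * (∑ l, (- ∑ g, F.Ginv l g p * dop u v s1 c s2 (F.Gm g β) p) * X l p
          + ∑ l, (if l = β then (1:ℂ) else 0) * dop u v s1 c s2 (X l) p) := by
        congr 1
        congr 1
        · apply Finset.sum_congr rfl; intro l _
          rw [show (∑ g, dop u v s1 c s2 (F.Ginv l g) p * F.Gm g β p * X l p)
              = (∑ g, dop u v s1 c s2 (F.Ginv l g) p * F.Gm g β p) * X l p from
            (Finset.sum_mul _ _ _).symm, dop_inv_rel F u v s1 c s2 hp l β]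
        · apply Finset.sum_congr rfl; intro l _
          rw [show (∑ g, F.Ginv l g p * F.Gm g β p * dop u v s1 c s2 (X l) p)
              = (∑ g, F.Ginv l g p * F.Gm g β p) * dop u v s1 c s2 (X l) p from
            (Finset.sum_mul _ _ _).symm, Ginv_Gm F hp l β]
    _ = _ := by
        have e1 : ∑ l, (- ∑ g, F.Ginv l g p * dop u v s1 c s2 (F.Gm g β) p) * X l p
            = - ∑ l, ∑ g, X l p * (F.Ginv l g p * dop u v s1 c s2 (F.Gm g β) p) := by
          rw [← Finset.sum_neg_distrib]
          apply Finset.sum_congr rfl; intro l _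
          rw [neg_mul]
          congr 1
          rw [Finset.sum_mul]
          apply Finset.sum_congr rfl; intro g _; ring
        have e2 : ∑ l, (if l = β then (1:ℂ) else 0) * dop u v s1 c s2 (X l) p
            = dop u v s1 c s2 (X β) p := by
          rw [Finset.sum_congr rfl (fun l (_ : l ∈ Finset.univ) => by
            rw [ite_mul, one_mul, zero_mul] :
            ∀ l ∈ Finset.univ, (if l = β then (1:ℂ) else 0) * dop u v s1 c s2 (X l) p
              = if l = β then dop u v s1 c s2 (X l) p else 0)]
          rw [Finset.sum_ite_eq' Finset.univ β (fun l => dop u v s1 c s2 (X l) p)]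
          simp
        rw [e1, e2]; ring

/-- Contraction for `δ_μ` of `L`-type objects. -/
lemma L_contract_h (hp : p ∈ slit n) (μ : Fin n) (X : Fin n → Pt n → ℂ)
    (hX : ∀ l, SmOn (X l)) (β : Fin n) :
    ∑ g, F.δh μ (fun q => (1/2 : ℂ) * ∑ l, F.Ginv l g q * X l q) p * F.Gm g β p
      = (1/2 : ℂ) * F.δh μ (X β) p
        - (1/2 : ℂ) * ∑ l, ∑ g, X l p * (F.Ginv l g p * F.δh μ (F.Gm g β) p) := by
  simp only [δh_eq]; exact dop_Lcontract F _ _ _ _ _ hp X hX β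

/-- Contraction for `δ_ν̄` of `L`-type objects. -/
lemma L_contract_hb (hp : p ∈ slit n) (ν : Fin n) (X : Fin n → Pt n → ℂ)
    (hX : ∀ l, SmOn (X l)) (β : Fin n) :
    ∑ g, F.δhb ν (fun q => (1/2 : ℂ) * ∑ l, F.Ginv l g q * X l q) p * F.Gm g β p
      = (1/2 : ℂ) * F.δhb ν (X β) p
        - (1/2 : ℂ) * ∑ l, ∑ g, X l p * (F.Ginv l g p * F.δhb ν (F.Gm g β) p) := by
  simp only [δhb_eq]; exact dop_Lcontract F _ _ _ _ _ hp X hX β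

/-- Algebraic contraction `∑_g L·G = ½ X_β`. -/
lemma alg_contract (hp : p ∈ slit n) (X : Fin n → ℂ) (β : Fin n) :
    ∑ g, ((1/2 : ℂ) * ∑ l, F.Ginv l g p * X l) * F.Gm g β p = (1/2 : ℂ) * X β := by
  have h1 : ∀ g : Fin n, ((1/2 : ℂ) * ∑ l, F.Ginv l g p * X l) * F.Gm g β p
      = (1/2 : ℂ) * ∑ l, X l * (F.Ginv l g p * F.Gm g β p) := by
    intro g
    rw [Finset.mul_sum, Finset.sum_mul, Finset.mul_sum]
    apply Finset.sum_congr rfl; intro l _; ring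
  rw [Finset.sum_congr rfl (fun g _ => h1 g), ← Finset.mul_sum, Finset.sum_comm]
  congr 1
  rw [Finset.sum_congr rfl (fun l (_ : l ∈ Finset.univ) => by
      rw [← Finset.mul_sum, Ginv_Gm F hp l β] :
      ∀ l ∈ Finset.univ, ∑ g, X l * (F.Ginv l g p * F.Gm g β p)
        = X l * (if l = β then 1 else 0))]
  simp [Finset.sum_ite_eq' Finset.univ β]

end Delta

end CFG

open ComplexConjugate CFG

/-- Lemma 3.1: the local-coordinate formula for the
holomorphic sectional curvature tensor `R_{αβ̄μν̄}` of the canonical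
connection. -/
theorem statement2 {n : ℕ} (hn : 2 ≤ n) (F : SPCF n) :
    ∀ (α β μ ν : Fin n), ∀ p ∈ slit n,
      F.Rc α β μ ν p =
        -(1 / 2 : ℂ) * (F.δhb ν (F.δh α (F.Gm μ β)) p + F.δhb β (F.δh μ (F.Gm α ν)) p
            + (∑ σ, F.δhb ν (F.Γ0 σ μ) p * F.Gm3 α β σ p)
            + (∑ σ, F.δhb β (F.Γ0 σ μ) p * F.Gm3 α ν σ p))
        + (1 / 4 : ℂ) * (∑ l, ∑ γ, (F.δh μ (F.Gm α l) p + F.δh α (F.Gm μ l) p)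
            * F.Ginv l γ p * (F.δhb ν (F.Gm γ β) p + F.δhb β (F.Gm γ ν) p))
        - (1 / 4 : ℂ) * (∑ l, ∑ γ, (F.δhb ν (F.Gm α l) p - F.δhb l (F.Gm α ν) p)
            * F.Ginv l γ p * (F.δh μ (F.Gm γ β) p - F.δh γ (F.Gm μ β) p))
        + (1 / 2 : ℂ) * (∑ τ, (F.δh μ (fun y => conj (F.Γ0 τ β y)) p * F.Gm3b α ν τ p
            - F.δh μ (fun y => conj (F.Γ0 τ ν y)) p * F.Gm3b α β τ p)) := by
  intro α β μ ν p hp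
  classical
  have sGm : ∀ a b : Fin n, SmOn (F.Gm a b) := fun a b => SmOn_Gm F a b
  have hB : ∀ l, SmOn (fun q => F.δhb ν (F.Gm α l) q - F.δhb l (F.Gm α ν) q) :=
    fun l => (SmOn_δhb F (sGm α l) ν).sub' (SmOn_δhb F (sGm α ν) l)
  have hA : ∀ l, SmOn (fun q => F.δh μ (F.Gm α l) q + F.δh α (F.Gm μ l) q) :=
    fun l => (SmOn_δh F (sGm α l) μ).add' (SmOn_δh F (sGm μ l) α)
  -- Step 1: split up `Rc`.
  have hRc : F.Rc α β μ ν p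
      = (∑ g, F.δh μ (F.Lhb g α ν) p * F.Gm g β p)
        - (∑ g, F.δhb ν (F.Lh g α μ) p * F.Gm g β p)
        + (∑ σ, F.Lhb σ α ν p * (∑ g, F.Lh g σ μ p * F.Gm g β p))
        - (∑ σ, F.Lh σ α μ p * (∑ g, F.Lhb g σ ν p * F.Gm g β p))
        - ∑ σ, F.Gm3 α β σ p * F.δhb ν (F.Γ0 σ μ) p := by
    have e0 : F.Rc α β μ ν p
        = (∑ g, (F.δh μ (F.Lhb g α ν) p - F.δhb ν (F.Lh g α μ) p
            + ∑ σ, (F.Lhb σ α ν p * F.Lh g σ μ p - F.Lh σ α μ p * F.Lhb g σ ν p))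
              * F.Gm g β p)
          - ∑ σ, F.Gm3 α β σ p * F.δhb ν (F.Γ0 σ μ) p := rfl
    rw [e0]
    congr 1
    have e1 : ∀ g : Fin n, (F.δh μ (F.Lhb g α ν) p - F.δhb ν (F.Lh g α μ) p
          + ∑ σ, (F.Lhb σ α ν p * F.Lh g σ μ p - F.Lh σ α μ p * F.Lhb g σ ν p))
            * F.Gm g β p
        = F.δh μ (F.Lhb g α ν) p * F.Gm g β p - F.δhb ν (F.Lh g α μ) p * F.Gm g β p
          + ∑ σ, (F.Lhb σ α ν p * (F.Lh g σ μ p * F.Gm g β p)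
              - F.Lh σ α μ p * (F.Lhb g σ ν p * F.Gm g β p)) := by
      intro g
      rw [add_mul, sub_mul, Finset.sum_mul]
      congr 1
      apply Finset.sum_congr rfl; intro σ _; ring
    rw [Finset.sum_congr rfl fun g _ => e1 g, Finset.sum_add_distrib,
      Finset.sum_sub_distrib]
    congr 1
    rw [Finset.sum_comm]
    rw [Finset.sum_congr rfl (fun σ (_ : σ ∈ Finset.univ) => Finset.sum_sub_distrib _ _),
      Finset.sum_sub_distrib,
      show (∑ σ, ∑ g, F.Lhb σ α ν p * (F.Lh g σ μ p * F.Gm g β p))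
          = ∑ σ, F.Lhb σ α ν p * ∑ g, F.Lh g σ μ p * F.Gm g β p from
        Finset.sum_congr rfl fun σ _ => (Finset.mul_sum _ _ _).symm,
      show (∑ σ, ∑ g, F.Lh σ α μ p * (F.Lhb g σ ν p * F.Gm g β p))
          = ∑ σ, F.Lh σ α μ p * ∑ g, F.Lhb g σ ν p * F.Gm g β p from
        Finset.sum_congr rfl fun σ _ => (Finset.mul_sum _ _ _).symm]
    ring
  -- Step 2: the two differentiated contractions.
  have hL1 : ∑ g, F.δh μ (F.Lhb g α ν) p * F.Gm g β p
      = (1/2 : ℂ) * (F.δh μ (F.δhb ν (F.Gm α β)) p - F.δh μ (F.δhb β (F.Gm α ν)) p)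
        - (1/2 : ℂ) * ∑ l, ∑ g, (F.δhb ν (F.Gm α l) p - F.δhb l (F.Gm α ν) p)
            * (F.Ginv l g p * F.δh μ (F.Gm g β) p) := by
    have h := L_contract_h F hp μ
      (fun l q => F.δhb ν (F.Gm α l) q - F.δhb l (F.Gm α ν) q) hB β
    rw [δh_sub' F hp μ (SmOn_δhb F (sGm α β) ν) (SmOn_δhb F (sGm α ν) β)] at h
    exact h
  have hL2 : ∑ g, F.δhb ν (F.Lh g α μ) p * F.Gm g β p
      = (1/2 : ℂ) * (F.δhb ν (F.δh μ (F.Gm α β)) p + F.δhb ν (F.δh α (F.Gm μ β)) p)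
        - (1/2 : ℂ) * ∑ l, ∑ g, (F.δh μ (F.Gm α l) p + F.δh α (F.Gm μ l) p)
            * (F.Ginv l g p * F.δhb ν (F.Gm g β) p) := by
    have h := L_contract_hb F hp ν
      (fun l q => F.δh μ (F.Gm α l) q + F.δh α (F.Gm μ l) q) hA β
    rw [δhb_add' F hp ν (SmOn_δh F (sGm α β) μ) (SmOn_δh F (sGm μ β) α)] at h
    exact h
  -- Step 3: the two algebraic contractions.
  have hL3 : ∀ σ : Fin n, ∑ g, F.Lh g σ μ p * F.Gm g β p
      = (1/2 : ℂ) * (F.δh μ (F.Gm σ β) p + F.δh σ (F.Gm μ β) p) :=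
    fun σ => alg_contract F hp (fun l => F.δh μ (F.Gm σ l) p + F.δh σ (F.Gm μ l) p) β
  have hL4 : ∀ σ : Fin n, ∑ g, F.Lhb g σ ν p * F.Gm g β p
      = (1/2 : ℂ) * (F.δhb ν (F.Gm σ β) p - F.δhb β (F.Gm σ ν) p) :=
    fun σ => alg_contract F hp (fun l => F.δhb ν (F.Gm σ l) p - F.δhb l (F.Gm σ ν) p) β
  -- Step 4: quadratic terms in canonical double-sum form.
  have hC : ∑ σ, F.Lhb σ α ν p * ((1/2 : ℂ) * (F.δh μ (F.Gm σ β) p + F.δh σ (F.Gm μ β) p))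
      = (1/4 : ℂ) * (∑ l, ∑ g, (F.δhb ν (F.Gm α l) p - F.δhb l (F.Gm α ν) p)
            * (F.Ginv l g p * F.δh μ (F.Gm g β) p))
        + (1/4 : ℂ) * (∑ l, ∑ g, (F.δhb ν (F.Gm α l) p - F.δhb l (F.Gm α ν) p)
            * (F.Ginv l g p * F.δh g (F.Gm μ β) p)) := by
    have e : ∀ σ : Fin n, F.Lhb σ α ν p
          * ((1/2 : ℂ) * (F.δh μ (F.Gm σ β) p + F.δh σ (F.Gm μ β) p))
        = ∑ l, ((1/4 : ℂ) * ((F.δhb ν (F.Gm α l) p - F.δhb l (F.Gm α ν) p)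
              * (F.Ginv l σ p * F.δh μ (F.Gm σ β) p))
            + (1/4 : ℂ) * ((F.δhb ν (F.Gm α l) p - F.δhb l (F.Gm α ν) p)
              * (F.Ginv l σ p * F.δh σ (F.Gm μ β) p))) := by
      intro σ
      have eL : F.Lhb σ α ν p = (1/2 : ℂ) * ∑ l, F.Ginv l σ p
          * (F.δhb ν (F.Gm α l) p - F.δhb l (F.Gm α ν) p) := rfl
      rw [eL, Finset.mul_sum, Finset.sum_mul]
      apply Finset.sum_congr rfl; intro l _; ring
    rw [Finset.sum_congr rfl fun σ _ => e σ, Finset.sum_comm,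
      Finset.mul_sum, Finset.mul_sum, ← Finset.sum_add_distrib]
    apply Finset.sum_congr rfl; intro l _
    rw [Finset.mul_sum, Finset.mul_sum, ← Finset.sum_add_distrib]
  have hD : ∑ σ, F.Lh σ α μ p * ((1/2 : ℂ) * (F.δhb ν (F.Gm σ β) p - F.δhb β (F.Gm σ ν) p))
      = (1/4 : ℂ) * (∑ l, ∑ g, (F.δh μ (F.Gm α l) p + F.δh α (F.Gm μ l) p)
            * (F.Ginv l g p * F.δhb ν (F.Gm g β) p))
        - (1/4 : ℂ) * (∑ l, ∑ g, (F.δh μ (F.Gm α l) p + F.δh α (F.Gm μ l) p)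
            * (F.Ginv l g p * F.δhb β (F.Gm g ν) p)) := by
    have e : ∀ σ : Fin n, F.Lh σ α μ p
          * ((1/2 : ℂ) * (F.δhb ν (F.Gm σ β) p - F.δhb β (F.Gm σ ν) p))
        = ∑ l, ((1/4 : ℂ) * ((F.δh μ (F.Gm α l) p + F.δh α (F.Gm μ l) p)
              * (F.Ginv l σ p * F.δhb ν (F.Gm σ β) p))
            - (1/4 : ℂ) * ((F.δh μ (F.Gm α l) p + F.δh α (F.Gm μ l) p)
              * (F.Ginv l σ p * F.δhb β (F.Gm σ ν) p))) := by
      intro σ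
      have eL : F.Lh σ α μ p = (1/2 : ℂ) * ∑ l, F.Ginv l σ p
          * (F.δh μ (F.Gm α l) p + F.δh α (F.Gm μ l) p) := rfl
      rw [eL, Finset.mul_sum, Finset.sum_mul]
      apply Finset.sum_congr rfl; intro l _; ring
    rw [Finset.sum_congr rfl fun σ _ => e σ, Finset.sum_comm,
      Finset.mul_sum, Finset.mul_sum, ← Finset.sum_sub_distrib]
    apply Finset.sum_congr rfl; intro l _
    rw [Finset.mul_sum, Finset.mul_sum, ← Finset.sum_sub_distrib]
  -- Step 5: the commutators.
  have hc1 := δ_comm_Gm F hp μ ν α β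
  have hc2 := δ_comm_Gm F hp μ β α ν
  -- Step 6: normalizations of the remaining sums.
  have sE : ∑ σ, F.Gm3 α β σ p * F.δhb ν (F.Γ0 σ μ) p
      = ∑ σ, F.δhb ν (F.Γ0 σ μ) p * F.Gm3 α β σ p := by
    apply Finset.sum_congr rfl; intro σ _; ring
  have sR1 : ∑ l, ∑ γ, (F.δh μ (F.Gm α l) p + F.δh α (F.Gm μ l) p)
        * F.Ginv l γ p * (F.δhb ν (F.Gm γ β) p + F.δhb β (F.Gm γ ν) p)
      = (∑ l, ∑ g, (F.δh μ (F.Gm α l) p + F.δh α (F.Gm μ l) p)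
            * (F.Ginv l g p * F.δhb ν (F.Gm g β) p))
        + (∑ l, ∑ g, (F.δh μ (F.Gm α l) p + F.δh α (F.Gm μ l) p)
            * (F.Ginv l g p * F.δhb β (F.Gm g ν) p)) := by
    rw [← Finset.sum_add_distrib]
    apply Finset.sum_congr rfl; intro l _
    rw [← Finset.sum_add_distrib]
    apply Finset.sum_congr rfl; intro g _; ring
  have sR2 : ∑ l, ∑ γ, (F.δhb ν (F.Gm α l) p - F.δhb l (F.Gm α ν) p)
        * F.Ginv l γ p * (F.δh μ (F.Gm γ β) p - F.δh γ (F.Gm μ β) p)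
      = (∑ l, ∑ g, (F.δhb ν (F.Gm α l) p - F.δhb l (F.Gm α ν) p)
            * (F.Ginv l g p * F.δh μ (F.Gm g β) p))
        - (∑ l, ∑ g, (F.δhb ν (F.Gm α l) p - F.δhb l (F.Gm α ν) p)
            * (F.Ginv l g p * F.δh g (F.Gm μ β) p)) := by
    rw [← Finset.sum_sub_distrib]
    apply Finset.sum_congr rfl; intro l _
    rw [← Finset.sum_sub_distrib]
    apply Finset.sum_congr rfl; intro g _; ring
  have sS : ∑ τ, (F.δh μ (fun y => conj (F.Γ0 τ β y)) p * F.Gm3b α ν τ p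
        - F.δh μ (fun y => conj (F.Γ0 τ ν y)) p * F.Gm3b α β τ p)
      = (∑ τ, F.δh μ (fun y => conj (F.Γ0 τ β y)) p * F.Gm3b α ν τ p)
        - ∑ τ, F.δh μ (fun y => conj (F.Γ0 τ ν y)) p * F.Gm3b α β τ p :=
    Finset.sum_sub_distrib _ _
  -- Final assembly.
  have eC : ∑ σ, F.Lhb σ α ν p * (∑ g, F.Lh g σ μ p * F.Gm g β p)
      = ∑ σ, F.Lhb σ α ν p
          * ((1/2 : ℂ) * (F.δh μ (F.Gm σ β) p + F.δh σ (F.Gm μ β) p)) :=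
    Finset.sum_congr rfl fun σ _ => by rw [hL3 σ]
  have eD : ∑ σ, F.Lh σ α μ p * (∑ g, F.Lhb g σ ν p * F.Gm g β p)
      = ∑ σ, F.Lh σ α μ p
          * ((1/2 : ℂ) * (F.δhb ν (F.Gm σ β) p - F.δhb β (F.Gm σ ν) p)) :=
    Finset.sum_congr rfl fun σ _ => by rw [hL4 σ]
  rw [hRc, hL1, hL2, eC, eD, hC, hD, sE, sR1, sR2, sS]
  linear_combination (1/2 : ℂ) * hc1 - (1/2 : ℂ) * hc2
end
end
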